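/- arXiv:2001.00424 — 6 statements merged into one kernel-verified Lean document; each statement's English description precedes it below -/
import Mathlib

section
/- For every integer n ≥ 3, the strong matching preclusion number of the n-dimensional bubble-sort star graph BS_n equals 2; that is, the minimum cardinality of a set F* of vertices and edges of BS_n such that the graph obtained from BS_n by deleting the vertices of F* (together with all edges incident to them) and the edges of F* has neither a perfect matching nor an almost-perfect matching is 2. -/
/-- The generating relation of the bubble-sort star graph: `u = v ∘ ⟨1,i⟩` for some
`i ∈ [2,n]` (0-based: swap of positions `0` and `i` with `i ≠ 0`), or `u = v ∘ ⟨i-1,i⟩`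
for some `i ∈ [3,n]` (0-based: swap of consecutive positions `i, j = i+1` with `i ≥ 1`). -/
def bssRel (n : ℕ) (u v : Equiv.Perm (Fin n)) : Prop :=
  (∃ i : Fin n, (i : ℕ) ≠ 0 ∧ u = v * Equiv.swap ⟨0, i.pos⟩ i) ∨
  (∃ i j : Fin n, (i : ℕ) + 1 = (j : ℕ) ∧ 1 ≤ (i : ℕ) ∧ u = v * Equiv.swap i j)

/-- The `n`-dimensional bubble-sort star graph `BS_n`, on the permutations of `{1,…,n}`. -/
def BS (n : ℕ) : SimpleGraph (Equiv.Perm (Fin n)) := SimpleGraph.fromRel (bssRel n)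

/-- A set of edges `M` is a perfect matching of `G`: `M` consists of edges of `G` and
every vertex lies in exactly one edge of `M`. -/
def IsPM {V : Type*} (G : SimpleGraph V) (M : Set (Sym2 V)) : Prop :=
  M ⊆ G.edgeSet ∧ ∀ v : V, ∃! e : Sym2 V, e ∈ M ∧ v ∈ e

/-- A set of edges `M` is an almost-perfect matching of `G`: there is exactly one
vertex lying in no edge of `M`, and every other vertex lies in exactly one edge of `M`. -/
def IsAPM {V : Type*} (G : SimpleGraph V) (M : Set (Sym2 V)) : Prop :=
  M ⊆ G.edgeSet ∧ ∃ w : V, (∀ e ∈ M, w ∉ e) ∧ ∀ v : V, v ≠ w → ∃! e : Sym2 V, e ∈ M ∧ v ∈ e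

/-- `G` has neither a perfect matching nor an almost-perfect matching. -/
def HasNoMatchings {V : Type*} (G : SimpleGraph V) : Prop :=
  (¬ ∃ M, IsPM G M) ∧ (¬ ∃ M, IsAPM G M)

/-- `(S, F)` is a strong matching preclusion set of `G`: deleting the vertices of `S`
(with all incident edges) and the edges of `F` leaves a graph with neither a perfect
matching nor an almost-perfect matching. -/
def IsSMPSet {V : Type*} (G : SimpleGraph V) (S : Set V) (F : Set (Sym2 V)) : Prop :=
  F ⊆ G.edgeSet ∧ HasNoMatchings ((G.deleteEdges F).induce (Sᶜ : Set V))

/-- `F` is a matching preclusion set of `G`: `G - F` has neither a perfect matching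
nor an almost-perfect matching. -/
def IsMPSet {V : Type*} (G : SimpleGraph V) (F : Set (Sym2 V)) : Prop :=
  F ⊆ G.edgeSet ∧ HasNoMatchings (G.deleteEdges F)

/-- `BS_n^i`: the set of permutations whose last entry equals `i`. -/
def BSslice {n : ℕ} (i : Fin n) : Set (Equiv.Perm (Fin n)) :=
  {a | a ⟨n - 1, Nat.sub_lt i.pos Nat.one_pos⟩ = i}

/-- `(V₁, V₂)` is a bipartition of `G`: the two classes partition the vertices and every
edge has one end in each class. -/
def Bipartition {V : Type*} (G : SimpleGraph V) (V1 V2 : Set V) : Prop :=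
  Disjoint V1 V2 ∧ V1 ∪ V2 = Set.univ ∧
    ∀ ⦃u v⦄, G.Adj u v → (u ∈ V1 ∧ v ∈ V2) ∨ (u ∈ V2 ∧ v ∈ V1)

/-!
The sign of a permutation properly 2-colours `BS_n`, and the two colour classes have the same
size because a perfect matching pairs them up. Deleting two even permutations therefore leaves
two more odd than even vertices, which rules out both perfect and almost-perfect matchings, so
`smp(BS_n) ≤ 2`. Conversely, right multiplication by `⟨1,2⟩` and by `⟨2,3⟩` gives two
edge-disjoint perfect matchings of `BS_n`: after deleting one edge one of them survives, and
after deleting one vertex the matching `u ↦ u ∘ ⟨1,2⟩` minus the edge at that vertex is almost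
perfect.
-/

open Function Equiv

variable {V : Type*} {G : SimpleGraph V}

namespace Bipartition

variable {V1 V2 : Set V}

theorem symm (h : Bipartition G V1 V2) : Bipartition G V2 V1 :=
  ⟨h.1.symm, Set.union_comm V1 V2 ▸ h.2.1, fun _ _ huv => (h.2.2 huv).symm⟩

theorem mem_right_of_adj (h : Bipartition G V1 V2) {u v : V} (huv : G.Adj u v) (hu : u ∈ V1) :
    v ∈ V2 := by
  rcases h.2.2 huv with ⟨-, hv⟩ | ⟨hu2, -⟩
  · exact hv
  · exact absurd hu2 (h.1.notMem_of_mem_left hu)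

theorem induce (h : Bipartition G V1 V2) (s : Set V) :
    Bipartition (G.induce s) (Subtype.val ⁻¹' V1) (Subtype.val ⁻¹' V2) :=
  ⟨h.1.preimage _, by rw [← Set.preimage_union, h.2.1, Set.preimage_univ],
    fun _ _ huv => h.2.2 huv⟩

/-- Sending each vertex to its partner injects `V1 \ U` into `V2 \ U`. -/
theorem ncard_diff_le [Finite V] (h : Bipartition G V1 V2) {M : Set (Sym2 V)}
    (hM : M ⊆ G.edgeSet) {U : Set V} (hcov : ∀ v ∉ U, ∃! e, e ∈ M ∧ v ∈ e)
    (hU : ∀ e ∈ M, ∀ u ∈ U, u ∉ e) : (V1 \ U).ncard ≤ (V2 \ U).ncard := by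
  have hpartner : ∀ v ∉ U, ∃ w, s(v, w) ∈ M := fun v hv => by
    obtain ⟨e, ⟨he, hve⟩, -⟩ := hcov v hv
    obtain ⟨w, rfl⟩ := Sym2.mem_iff_exists.mp hve
    exact ⟨w, he⟩
  choose! partner hpartner using hpartner
  have hpartner_notMem : ∀ v ∉ U, partner v ∉ U := fun v hv hpv =>
    hU _ (hpartner v hv) _ hpv (Sym2.mem_mk_right _ _)
  refine Set.ncard_le_ncard_of_injOn partner ?_ ?_
  · rintro v ⟨hv1, hvU⟩
    exact ⟨h.mem_right_of_adj (hM (hpartner v hvU)) hv1, hpartner_notMem v hvU⟩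
  · rintro v ⟨-, hv⟩ w ⟨-, hw⟩ hvw
    have hedge := (hcov _ (hpartner_notMem v hv)).unique
      ⟨hpartner v hv, Sym2.mem_mk_right _ _⟩ ⟨hvw ▸ hpartner w hw, Sym2.mem_mk_right _ _⟩
    rw [hvw] at hedge
    exact Sym2.congr_left.mp hedge

theorem ncard_eq_of_isPM [Finite V] (h : Bipartition G V1 V2) {M : Set (Sym2 V)}
    (hM : IsPM G M) : V1.ncard = V2.ncard := by
  have key : ∀ {W1 W2 : Set V}, Bipartition G W1 W2 → W1.ncard ≤ W2.ncard := fun h' => by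
    simpa using h'.ncard_diff_le hM.1 (U := ∅) (fun v _ => hM.2 v) (by simp)
  exact le_antisymm (key h) (key h.symm)

theorem ncard_le_ncard_add_one_of_isAPM [Finite V] (h : Bipartition G V1 V2)
    {M : Set (Sym2 V)} (hM : IsAPM G M) : V2.ncard ≤ V1.ncard + 1 := by
  obtain ⟨hsub, w, hw, hcov⟩ := hM
  have hdiff := h.symm.ncard_diff_le hsub (U := {w}) hcov fun e he u hu => hu ▸ hw e he
  calc V2.ncard ≤ (V2 \ {w}).ncard + 1 := by
        simpa using Set.ncard_le_ncard_sdiff_add_ncard V2 {w}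
    _ ≤ V1.ncard + 1 := by have := Set.ncard_sdiff_singleton_le V1 w; omega

theorem hasNoMatchings_of_ncard_add_two_le [Finite V] (h : Bipartition G V1 V2)
    (hcard : V1.ncard + 2 ≤ V2.ncard) : HasNoMatchings G :=
  ⟨fun ⟨_, hM⟩ => by have := h.ncard_eq_of_isPM hM; omega,
    fun ⟨_, hM⟩ => by have := h.ncard_le_ncard_add_one_of_isAPM hM; omega⟩

theorem hasNoMatchings_induce_compl [Finite V] (h : Bipartition G V1 V2)
    (hbal : V1.ncard = V2.ncard) {S : Set V} (hS : S ⊆ V1) (hS2 : 2 ≤ S.ncard) :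
    HasNoMatchings (G.induce Sᶜ) := by
  have hcard : ∀ W : Set V, (Subtype.val ⁻¹' W : Set (Sᶜ : Set V)).ncard = (W \ S).ncard :=
    fun W => by
      rw [← Set.ncard_image_of_injective _ Subtype.val_injective, Subtype.image_preimage_coe,
        Set.sdiff_eq, Set.inter_comm]
  refine (h.induce Sᶜ).hasNoMatchings_of_ncard_add_two_le ?_
  rw [hcard, hcard, Set.ncard_sdiff hS,
    sdiff_eq_left.mpr (h.1.symm.mono_right hS)]
  have := Set.ncard_le_ncard hS
  omega

end Bipartition

section Involution

variable {σ : V → V}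

theorem Function.Involutive.sym2_mk_eq_of_mem (hσ : Involutive σ) {u v : V}
    (hv : v ∈ s(u, σ u)) : s(u, σ u) = s(v, σ v) := by
  rcases Sym2.mem_iff.mp hv with rfl | rfl
  · rfl
  · rw [hσ u, Sym2.eq_swap]

theorem isPM_of_involutive (hσ : Involutive σ) (hadj : ∀ v, G.Adj v (σ v)) :
    IsPM G (Set.range fun v => s(v, σ v)) := by
  refine ⟨Set.range_subset_iff.mpr hadj,
    fun v => ⟨s(v, σ v), ⟨⟨v, rfl⟩, Sym2.mem_mk_left _ _⟩, ?_⟩⟩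
  rintro _ ⟨⟨u, rfl⟩, hv⟩
  exact hσ.sym2_mk_eq_of_mem hv

theorem isAPM_of_involutive (hσ : Involutive σ) {w : V} (hw : σ w = w)
    (hadj : ∀ v, v ≠ w → G.Adj v (σ v)) :
    IsAPM G ((fun v => s(v, σ v)) '' {w}ᶜ) := by
  refine ⟨Set.image_subset_iff.mpr fun v hv => hadj v hv, w, ?_, fun v hv =>
    ⟨s(v, σ v), ⟨⟨v, hv, rfl⟩, Sym2.mem_mk_left _ _⟩, ?_⟩⟩
  · rintro _ ⟨v, hv, rfl⟩ hwv
    have hvw : v ∈ s(w, σ w) := hσ.sym2_mk_eq_of_mem hwv ▸ Sym2.mem_mk_left v (σ v)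
    rw [hw, Sym2.mem_iff, or_self] at hvw
    exact hv hvw
  · rintro _ ⟨⟨u, -, rfl⟩, hv⟩
    exact hσ.sym2_mk_eq_of_mem hv

theorem exists_isPM_induce_of_mapsTo (hσ : Involutive σ) {s : Set V} (hmaps : Set.MapsTo σ s s)
    (hadj : ∀ v ∈ s, G.Adj v (σ v)) : ∃ M, IsPM (G.induce s) M :=
  ⟨_, isPM_of_involutive (σ := hmaps.restrict) (fun x => Subtype.ext (hσ x))
    fun x => hadj x x.2⟩

/-- Deleting `v`, its partner `σ v` becomes the unmatched vertex. -/
theorem exists_isAPM_induce_compl_singleton (hσ : Involutive σ) (hadj : ∀ v, G.Adj v (σ v))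
    (v : V) : ∃ M, IsAPM (G.induce {v}ᶜ) M := by
  classical
  let τ : ({v}ᶜ : Set V) → ({v}ᶜ : Set V) := fun x =>
    if h : σ x = v then x else ⟨σ x, h⟩
  have hτ : ∀ x : ({v}ᶜ : Set V), σ x ≠ v → (τ x : V) = σ x := fun x hx => by
    simp [τ, hx]
  let w : ({v}ᶜ : Set V) := ⟨σ v, (hadj v).ne'⟩
  refine ⟨_, isAPM_of_involutive (σ := τ) (w := w) (fun x => ?_) (by simp [τ, w, hσ v]) ?_⟩
  · by_cases hx : σ x = v
    · simp [τ, hx]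
    · have hx' : σ (τ x) ≠ v := by rw [hτ x hx, hσ x]; exact x.2
      exact Subtype.ext (by rw [hτ _ hx', hτ x hx, hσ x])
  · intro x hxw
    have hx : σ x ≠ v := fun hx => hxw (Subtype.ext (by simp [w, ← hx, hσ x]))
    rw [SimpleGraph.induce_adj, hτ x hx]
    exact hadj x

end Involution

theorem two_le_ncard_add_ncard_of_isSMPSet [Finite V] {σ τ : V → V} (hσ : Involutive σ)
    (hτ : Involutive τ) (hσadj : ∀ v, G.Adj v (σ v)) (hτadj : ∀ v, G.Adj v (τ v))
    (hdisj : ∀ v w, s(v, σ v) ≠ s(w, τ w)) {S : Set V} {F : Set (Sym2 V)}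
    (h : IsSMPSet G S F) : 2 ≤ S.ncard + F.ncard := by
  obtain ⟨-, hnoPM, hnoAPM⟩ := h
  by_contra! hlt
  obtain hS | hS : S.ncard = 0 ∨ S.ncard = 1 := by omega
  · rw [(Set.ncard_eq_zero S.toFinite).mp hS] at hnoPM
    have hF : ∀ {e e'}, e ∈ F → e' ∈ F → e = e' :=
      (Set.ncard_le_one_iff F.toFinite).mp (by omega)
    obtain ⟨ρ, hρ, hρadj⟩ :
        ∃ ρ : V → V, Involutive ρ ∧ ∀ v, (G.deleteEdges F).Adj v (ρ v) := by
      by_cases hσF : ∃ u, s(u, σ u) ∈ F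
      · obtain ⟨u, hu⟩ := hσF
        exact ⟨τ, hτ, fun v => SimpleGraph.deleteEdges_adj.mpr
          ⟨hτadj v, fun hv => hdisj u v (hF hu hv)⟩⟩
      · exact ⟨σ, hσ, fun v => SimpleGraph.deleteEdges_adj.mpr
          ⟨hσadj v, fun hv => hσF ⟨v, hv⟩⟩⟩
    exact hnoPM (exists_isPM_induce_of_mapsTo hρ (fun _ _ => Set.notMem_empty _)
      fun v _ => hρadj v)
  · obtain ⟨v, rfl⟩ := Set.ncard_eq_one.mp hS
    rw [(Set.ncard_eq_zero F.toFinite).mp (by omega), SimpleGraph.deleteEdges_empty] at hnoAPM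
    exact hnoAPM (exists_isAPM_induce_compl_singleton hσ hσadj v)

theorem sym2_mk_mul_ne {Γ : Type*} [Group Γ] {t t' : Γ} (htt' : t ≠ t') (ht' : t' * t' = 1)
    (u w : Γ) : s(u, u * t) ≠ s(w, w * t') := by
  rw [Ne, Sym2.eq_iff]
  rintro (⟨rfl, h⟩ | ⟨rfl, h⟩)
  · exact htt' (mul_left_cancel h)
  · apply htt'
    rw [mul_assoc, mul_eq_left] at h
    rw [eq_inv_of_mul_eq_one_right h, ← eq_inv_of_mul_eq_one_right ht']

namespace BS

variable {n : ℕ}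

theorem sign_eq_neg_of_adj {u v : Perm (Fin n)} (h : (BS n).Adj u v) :
    Perm.sign u = -Perm.sign v := by
  have key : ∀ a b, bssRel n a b → Perm.sign a = -Perm.sign b := by
    rintro a b (⟨i, hi, rfl⟩ | ⟨i, j, hij, -, rfl⟩)
    · rw [map_mul, Perm.sign_swap (by simp [Fin.ext_iff, Ne.symm hi]), mul_neg_one]
    · rw [map_mul, Perm.sign_swap (by rintro rfl; omega), mul_neg_one]
  rcases h.2 with h | h
  · exact key u v h
  · rw [key v u h, neg_neg]

theorem bipartition_sign (n : ℕ) :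
    Bipartition (BS n) {u | Perm.sign u = 1} {u | Perm.sign u = 1}ᶜ := by
  refine ⟨disjoint_compl_right, Set.union_compl_self _, fun u v huv => ?_⟩
  simp only [Set.mem_compl_iff, Set.mem_ofPred_eq, sign_eq_neg_of_adj huv]
  rcases Int.units_eq_one_or (Perm.sign v) with hv | hv <;> simp [hv]

theorem adj_mul_swap {u : Perm (Fin n)} {i j : Fin n} (hij : i ≠ j)
    (h : bssRel n (u * swap i j) u) :
    (BS n).Adj u (u * swap i j) := by
  refine (SimpleGraph.fromRel_adj _ _ _).mpr ⟨?_, Or.inr h⟩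
  rwa [Ne, eq_comm, mul_eq_left, swap_eq_one_iff]

theorem adj_mul_swap_zero {i j : Fin n} (hi : (i : ℕ) = 0) (hj : (j : ℕ) ≠ 0)
    (u : Perm (Fin n)) : (BS n).Adj u (u * swap i j) := by
  obtain rfl : i = ⟨0, j.pos⟩ := Fin.ext hi
  exact adj_mul_swap (by simp [Fin.ext_iff, Ne.symm hj]) (Or.inl ⟨j, hj, rfl⟩)

theorem adj_mul_swap_succ {i j : Fin n} (hij : (i : ℕ) + 1 = j) (hi : 1 ≤ (i : ℕ))
    (u : Perm (Fin n)) : (BS n).Adj u (u * swap i j) :=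
  adj_mul_swap (by rintro rfl; omega) (Or.inr ⟨i, j, hij, hi, rfl⟩)

theorem adj_mul_swap_zero_one (m : ℕ) (u : Perm (Fin (m + 3))) :
    (BS (m + 3)).Adj u (u * swap 0 1) :=
  adj_mul_swap_zero rfl one_ne_zero u

theorem two_mod_add_three (m : ℕ) : 2 % (m + 3) = 2 :=
  Nat.mod_eq_of_lt (by omega)

theorem swap_zero_one_ne_swap_one_two (m : ℕ) : swap (0 : Fin (m + 3)) 1 ≠ swap 1 2 := by
  intro h
  have h0 := congr($h 0)
  rw [swap_apply_left, swap_apply_of_ne_of_ne (by simp)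
    (by simp [Fin.ext_iff, two_mod_add_three])] at h0
  simp at h0

theorem two_le_ncard_add_ncard (hn : 3 ≤ n) {S : Set (Perm (Fin n))}
    {F : Set (Sym2 (Perm (Fin n)))} (h : IsSMPSet (BS n) S F) : 2 ≤ S.ncard + F.ncard := by
  obtain ⟨m, rfl⟩ : ∃ m, n = m + 3 := ⟨n - 3, by omega⟩
  exact two_le_ncard_add_ncard_of_isSMPSet (mul_swap_involutive 0 1) (mul_swap_involutive 1 2)
    (adj_mul_swap_zero_one m) (adj_mul_swap_succ (i := 1) (j := 2) rfl le_rfl)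
    (sym2_mk_mul_ne (swap_zero_one_ne_swap_one_two m) (swap_mul_self 1 2)) h

theorem exists_isSMPSet_ncard_eq_two (hn : 3 ≤ n) :
    ∃ S : Set (Perm (Fin n)), S.ncard = 2 ∧ IsSMPSet (BS n) S ∅ := by
  obtain ⟨m, rfl⟩ : ∃ m, n = m + 3 := ⟨n - 3, by omega⟩
  have hcard : ({1, swap 0 1 * swap 1 2} : Set (Perm (Fin (m + 3)))).ncard = 2 := by
    refine Set.ncard_pair fun h => swap_zero_one_ne_swap_one_two m ?_
    rw [eq_comm, mul_eq_one_iff_eq_inv, swap_inv] at h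
    exact h
  refine ⟨_, hcard, Set.empty_subset _, ?_⟩
  rw [SimpleGraph.deleteEdges_empty]
  have hbal := (bipartition_sign _).ncard_eq_of_isPM
    (isPM_of_involutive (mul_swap_involutive 0 1) (adj_mul_swap_zero_one m))
  refine (bipartition_sign _).hasNoMatchings_induce_compl hbal ?_ hcard.ge
  rintro _ (rfl | rfl)
  · simp
  · simp [Fin.ext_iff, two_mod_add_three]

end BS

/-- For every `n ≥ 3`, the strong matching preclusion number of `BS_n` equals `2`:
`2` is the least possible value of `|S| + |F|` over all strong matching preclusion
sets `(S, F)` of `BS_n`. -/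
theorem smp_bubbleSortStar (n : ℕ) (hn : 3 ≤ n) :
    IsLeast {k : ℕ | ∃ (S : Set (Equiv.Perm (Fin n))) (F : Set (Sym2 (Equiv.Perm (Fin n)))),
      IsSMPSet (BS n) S F ∧ k = S.ncard + F.ncard} 2 := by
  obtain ⟨S, hS, hSMP⟩ := BS.exists_isSMPSet_ncard_eq_two hn
  refine ⟨⟨S, ∅, hSMP, by rw [hS, Set.ncard_empty]⟩, ?_⟩
  rintro _ ⟨S, F, h, rfl⟩
  exact BS.two_le_ncard_add_ncard hn h
end

section
/- For every integer n ≥ 3, every optimal strong matching preclusion set of the n-dimensional bubble-sort star graph BS_n consists of two vertices lying in the same bipartition class of BS_n, i.e. it is a set {u, v} of two distinct permutations of {1,…,n} having the same parity (both even or both odd). -/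
/-!
`BS n` is the Cayley graph of `Perm (Fin n)` for a generating set of transpositions, so every
generator `g` gives a perfect matching `{x, x * g}`, and distinct generators give disjoint ones.
Since there are at least three generators, two deleted edges, or one deleted edge and one
deleted vertex, miss one of these matchings, which survives (minus the pair through the deleted
vertex).

If two vertices `u`, `v` of opposite sign are deleted, fix a generator `s`. Even permutations are
products of elements `s * t`, so there is a path `u = x₀, x₀ s, x₁, x₁ s, …, xₖ = v s, v`
alternating with the matching of `s`; after loop erasure, switching the matching along it covers
every vertex except `u` and `v`.
-/

open Equiv
open Function (Involutive fixedPoints IsFixedPt mem_fixedPoints)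

theorem Relation.ReflTransGen.exists_isChain_cons_nodup {α : Type*} {r : α → α → Prop} {a b : α}
    (h : Relation.ReflTransGen r a b) :
    ∃ l, (a :: l).IsChain r ∧ (a :: l).Nodup ∧ (a :: l).getLast (List.cons_ne_nil a l) = b := by
  induction h using Relation.ReflTransGen.head_induction_on with
  | refl => exact ⟨[], List.IsChain.singleton b, List.nodup_singleton b, rfl⟩
  | @head a c hac _ ih =>
    obtain ⟨l, hchain, hnd, hlast⟩ := ih
    by_cases ha : a ∈ c :: l
    · obtain ⟨s, t, hst⟩ := List.append_of_mem ha
      rw [hst] at hchain hnd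
      refine ⟨t, hchain.right_of_append, hnd.of_append_right, ?_⟩
      rw [← hlast, List.getLast_congr _ (by simp) hst, List.getLast_append_of_ne_nil]
    · exact ⟨c :: l, List.isChain_cons_cons.2 ⟨hac, hchain⟩, List.nodup_cons.2 ⟨ha, hnd⟩,
        by rwa [List.getLast_cons_cons]⟩

lemma Submonoid.reflTransGen_mul_of_mem_closure {M : Type*} [Monoid M] {T : Set M} {w : M}
    (hw : w ∈ Submonoid.closure T) (x : M) :
    Relation.ReflTransGen (fun a b => ∃ t ∈ T, b = a * t) x (x * w) := by
  induction hw using Submonoid.closure_induction generalizing x with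
  | mem t ht => exact .single ⟨t, ht, rfl⟩
  | one => rw [mul_one]
  | mul a b _ _ iha ihb => rw [← mul_assoc]; exact (iha x).trans (ihb (x * a))

namespace SimpleGraph

variable {V : Type*} {G : SimpleGraph V} {p σ : V → V}

/-- A matching encoded as an involution: `p` matches each vertex it moves with its image, and its
fixed points are the unmatched vertices. -/
structure IsPairing (G : SimpleGraph V) (p : V → V) : Prop where
  involutive : Involutive p
  adj : ∀ x, p x ≠ x → G.Adj x (p x)

lemma _root_.Function.Involutive.sym2_mk_eq_of_mem_s1 (hp : Involutive p) {x y : V}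
    (h : x ∈ s(y, p y)) : s(y, p y) = s(x, p x) := by
  rcases Sym2.mem_iff.1 h with rfl | rfl
  · rfl
  · rw [hp, Sym2.eq_swap]

lemma isPairing_of_forall_adj (hp : Involutive p) (hadj : ∀ x, G.Adj x (p x)) :
    G.IsPairing p ∧ fixedPoints p = ∅ :=
  ⟨⟨hp, fun x _ => hadj x⟩, Set.eq_empty_of_forall_notMem fun x hx => (hadj x).ne hx.symm⟩

namespace IsPairing

lemma isPM (h : G.IsPairing p) (hfix : fixedPoints p = ∅) :
    IsPM G (Set.range fun x => s(x, p x)) := by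
  have hmove : ∀ x, p x ≠ x := fun x hx => (Set.eq_empty_iff_forall_notMem.1 hfix) x hx
  refine ⟨?_, fun x => ⟨s(x, p x), ⟨⟨x, rfl⟩, Sym2.mem_mk_left _ _⟩, ?_⟩⟩
  · rintro _ ⟨x, rfl⟩
    exact h.adj x (hmove x)
  · rintro _ ⟨⟨y, rfl⟩, hx⟩
    exact h.involutive.sym2_mk_eq_of_mem_s1 hx

lemma isAPM (h : G.IsPairing p) {w : V} (hfix : fixedPoints p = {w}) :
    IsAPM G ((fun x => s(x, p x)) '' {w}ᶜ) := by
  have hfix' : ∀ x, p x = x ↔ x = w := fun x => Set.ext_iff.1 hfix x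
  refine ⟨?_, w, ?_, fun x hx => ⟨s(x, p x), ⟨⟨x, hx, rfl⟩, Sym2.mem_mk_left _ _⟩, ?_⟩⟩
  · rintro _ ⟨x, hx, rfl⟩
    exact h.adj x (mt (hfix' x).1 hx)
  · rintro _ ⟨y, hy, rfl⟩ hwy
    rcases Sym2.mem_iff.1 hwy with rfl | hw
    · exact hy rfl
    · exact hy (by rw [← h.involutive y, ← hw]; exact (hfix' w).2 rfl)
  · rintro _ ⟨⟨y, -, rfl⟩, hx'⟩
    exact h.involutive.sym2_mk_eq_of_mem_s1 hx'

lemma mapsTo_compl {S : Set V} (h : G.IsPairing p) (hS : S ⊆ fixedPoints p) :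
    Set.MapsTo p Sᶜ Sᶜ := fun x hx hpx => hx <| by
  have hfx : p (p x) = p x := hS hpx
  rw [h.involutive x] at hfx
  rwa [hfx]

lemma induce {S : Set V} (h : G.IsPairing p) (hS : S ⊆ fixedPoints p) :
    (G.induce Sᶜ).IsPairing ((h.mapsTo_compl hS).restrict p Sᶜ Sᶜ) ∧
      ∀ x, x ∈ fixedPoints ((h.mapsTo_compl hS).restrict p Sᶜ Sᶜ) ↔ (x : V) ∈ fixedPoints p :=
  ⟨⟨fun x => Subtype.ext (h.involutive x), fun x hx => h.adj x (fun h' => hx (Subtype.ext h'))⟩,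
    fun _ => Subtype.ext_iff⟩

lemma exists_isPM_induce {S : Set V} (h : G.IsPairing p) (hfix : fixedPoints p = S) :
    ∃ M, IsPM (G.induce Sᶜ) M := by
  obtain ⟨hq, hqfix⟩ := h.induce hfix.ge
  exact ⟨_, hq.isPM (Set.eq_empty_of_forall_notMem fun x hx => x.2 (hfix ▸ (hqfix x).1 hx))⟩

lemma exists_isAPM_induce {S : Set V} {w : V} (h : G.IsPairing p) (hw : w ∉ S)
    (hfix : fixedPoints p = insert w S) : ∃ M, IsAPM (G.induce Sᶜ) M := by
  obtain ⟨hq, hqfix⟩ := h.induce (hfix ▸ Set.subset_insert w S)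
  refine ⟨_, hq.isAPM (w := ⟨w, hw⟩) (Set.ext fun x => ?_)⟩
  rw [hqfix, hfix, Set.mem_singleton_iff, Subtype.ext_iff, Set.mem_insert_iff,
    or_iff_left x.2]

end IsPairing

lemma exists_isPairing_fixedPoints_pair (hσ : Involutive σ) (hadj : ∀ x, G.Adj x (σ x)) (a : V) :
    ∃ p, G.IsPairing p ∧ fixedPoints p = {a, σ a} ∧ ∀ x, x ≠ a → σ x ≠ a → p x = σ x := by
  classical
  have hout : ∀ x, ¬(x = a ∨ x = σ a) → ¬(σ x = a ∨ σ x = σ a) := by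
    rintro x hx (h | h)
    · exact hx (Or.inr (by rw [← h, hσ]))
    · exact hx (Or.inl (hσ.injective h))
  refine ⟨fun x => if x = a ∨ x = σ a then x else σ x, ⟨fun x => ?_, fun x hx => ?_⟩, ?_,
    fun x h₁ h₂ => ?_⟩
  · by_cases hx : x = a ∨ x = σ a
    · simp only [if_pos hx]
    · simp only [if_neg hx, if_neg (hout x hx), hσ x]
  · have hx' : ¬(x = a ∨ x = σ a) := fun h => hx (if_pos h)
    simp only [if_neg hx']
    exact hadj x
  · ext x
    by_cases hx : x = a ∨ x = σ a
    · simpa [IsFixedPt, if_pos hx] using hx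
    · simpa [IsFixedPt, if_neg hx, (hadj x).ne'] using hx
  · have hx : ¬(x = a ∨ x = σ a) := by
      rintro (h | h)
      exacts [h₁ h, h₂ (by rw [h, hσ])]
    simp only [if_neg hx]

/-- The unmatched vertex `c` is matched with the partner of `a`, which frees `a` instead. -/
lemma IsPairing.swap_conj [DecidableEq V] {a c d : V} (h : G.IsPairing p)
    (hfix : fixedPoints p = {c, d}) (hac : a ≠ c) (had : a ≠ d) (hcd : c ≠ d)
    (hadj : G.Adj (p a) c) :
    G.IsPairing (swap a c ∘ p ∘ swap a c) ∧ fixedPoints (swap a c ∘ p ∘ swap a c) = {a, d} := by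
  have hfix' : ∀ x, p x = x ↔ x = c ∨ x = d := fun x => Set.ext_iff.1 hfix x
  have hpc : p c = c := (hfix' c).2 (Or.inl rfl)
  have hpa : p a ≠ a := fun h' => ((hfix' a).1 h').elim hac had
  have hpac : p a ≠ c := fun h' => hac (by rw [← h.involutive a, h', hpc])
  refine ⟨⟨fun x => by simp [h.involutive _], fun x hx => ?_⟩, Set.ext fun x => ?_⟩
  · rcases eq_or_ne x a with rfl | hxa
    · simp [hpc] at hx
    rcases eq_or_ne x c with rfl | hxc
    · simpa [swap_apply_of_ne_of_ne hpa hpac] using hadj.symm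
    by_cases hpx : p x = a
    · have hx' : x = p a := by rw [← hpx, h.involutive]
      rw [Function.comp_apply, Function.comp_apply, swap_apply_of_ne_of_ne hxa hxc, hpx,
        swap_apply_left, hx']
      exact hadj
    · have hpxc : p x ≠ c := fun h' => hxc (by rw [← h.involutive x, h', hpc])
      have hpxx : p x ≠ x := by
        simpa [swap_apply_of_ne_of_ne hxa hxc, swap_apply_of_ne_of_ne hpx hpxc] using hx
      simpa [swap_apply_of_ne_of_ne hxa hxc, swap_apply_of_ne_of_ne hpx hpxc] using h.adj x hpxx
  · simp only [mem_fixedPoints, IsFixedPt, Function.comp_apply, swap_apply_eq_iff, hfix',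
      Set.mem_insert_iff, Set.mem_singleton_iff, swap_apply_right,
      swap_apply_of_ne_of_ne had.symm hcd.symm]

/-- The chain `a = x₀, x₁, …, xₖ = b` encodes the path `x₀, σ x₀, x₁, σ x₁, …, xₖ, σ xₖ`, which
alternates with the matching `σ`. The last conjunct is the induction invariant. -/
theorem exists_isPairing_of_isChain [DecidableEq V] (hσ : Involutive σ)
    (hadj : ∀ x, G.Adj x (σ x)) {b : V} :
    ∀ (a : V) (l : List V), (a :: l).IsChain (fun x y => G.Adj (σ x) y) → (a :: l).Nodup →
      (∀ x ∈ a :: l, σ x ∉ a :: l) → (a :: l).getLast (List.cons_ne_nil a l) = b →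
      ∃ p, G.IsPairing p ∧ fixedPoints p = {a, σ b} ∧
        ∀ x, x ∉ a :: l → σ x ∉ a :: l → p x = σ x
  | a, [], _, _, _, hlast => by
    obtain ⟨p, hp, hfix, hoff⟩ := exists_isPairing_fixedPoints_pair hσ hadj a
    obtain rfl : a = b := hlast
    exact ⟨p, hp, hfix, fun x hx hσx => hoff x (by simpa using hx) (by simpa using hσx)⟩
  | a, c :: l, hchain, hnd, hsep, hlast => by
    rw [List.isChain_cons_cons] at hchain
    rw [List.nodup_cons] at hnd
    rw [List.getLast_cons_cons] at hlast
    obtain ⟨p, hp, hfix, hoff⟩ := exists_isPairing_of_isChain hσ hadj c l hchain.2 hnd.2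
      (fun x hx hσx => hsep x (List.mem_cons_of_mem a hx) (List.mem_cons_of_mem a hσx)) hlast
    have hσb : σ b ∉ a :: c :: l :=
      hsep b (List.mem_cons_of_mem a (hlast ▸ List.getLast_mem _))
    have hσa : σ a ∉ c :: l := fun h => hsep a List.mem_cons_self (List.mem_cons_of_mem a h)
    have hac : a ≠ c := fun h => hnd.1 (h ▸ List.mem_cons_self)
    have hpa : p a = σ a := hoff a hnd.1 hσa
    obtain ⟨hp', hfix'⟩ := hp.swap_conj hfix hac (fun h => hσb (h ▸ List.mem_cons_self))
      (fun h => hσb (h ▸ List.mem_cons_of_mem a List.mem_cons_self)) (hpa ▸ hchain.1)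
    refine ⟨_, hp', hfix', fun x hx hσx => ?_⟩
    simp only [List.mem_cons, not_or] at hx hσx
    simp only [Function.comp_apply, swap_apply_of_ne_of_ne hx.1 hx.2.1,
      hoff x (by simpa using hx.2) (by simpa using hσx.2),
      swap_apply_of_ne_of_ne hσx.1 hσx.2.1]

section Cayley

variable {Γ : Type*} [Group Γ] {X : Set Γ}

lemma mulCayley_adj_mul {g : Γ} (hg : g ∈ X) (hg1 : g ≠ 1) (x : Γ) :
    (mulCayley X).Adj x (x * g) :=
  (mulCayley_adj' X x (x * g)).2 ⟨fun h => hg1 (by simpa using h.symm), g, hg, Or.inl rfl⟩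

lemma map_eq_neg_of_mulCayley_adj (χ : Γ →* ℤˣ) (hχ : ∀ g ∈ X, χ g = -1) {x y : Γ}
    (h : (mulCayley X).Adj x y) : χ y = -χ x := by
  rcases ((mulCayley_adj X x y).1 h).2 with hxy | hyx
  · rw [← mul_inv_cancel_left x y, map_mul, hχ _ hxy, mul_neg_one]
  · rw [← mul_inv_cancel_left y x, map_mul, hχ _ hyx, mul_neg_one, neg_neg]

lemma eq_of_sym2_mk_mul_eq {g h x y : Γ} (hh : h * h = 1) (e : s(x, x * g) = s(y, y * h)) :
    g = h := by
  rcases Sym2.eq_iff.1 e with ⟨rfl, he⟩ | ⟨rfl, he⟩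
  · exact mul_left_cancel he
  · rw [mul_assoc, mul_eq_left] at he
    exact (eq_inv_of_mul_eq_one_right he).trans (inv_eq_of_mul_eq_one_right hh)

/-- Each edge lies in the matching `{s(x, x * g)}` of at most one involution `g`. -/
lemma exists_mem_forall_sym2_mk_mul_notMem (hX : ∀ g ∈ X, g * g = 1) {a b c : Γ}
    (ha : a ∈ X) (hb : b ∈ X) (hc : c ∈ X) (hab : a ≠ b) (hac : a ≠ c) (hbc : b ≠ c)
    (e₁ e₂ : Sym2 Γ) : ∃ g ∈ X, ∀ x, s(x, x * g) ∉ ({e₁, e₂} : Set (Sym2 Γ)) := by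
  let Uses (g : Γ) (e : Sym2 Γ) : Prop := ∃ x, s(x, x * g) = e
  have huniq : ∀ {g h e}, h ∈ X → Uses g e → Uses h e → g = h := by
    rintro g h e hh ⟨x, rfl⟩ ⟨y, hy⟩
    exact eq_of_sym2_mk_mul_eq (hX h hh) hy.symm
  by_contra! hall
  have hused : ∀ g ∈ X, Uses g e₁ ∨ Uses g e₂ := fun g hg =>
    let ⟨x, hx⟩ := hall g hg
    hx.imp (⟨x, ·⟩) (⟨x, ·⟩)
  rcases hused a ha with h₁ | h₁ <;> rcases hused b hb with h₂ | h₂ <;>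
    rcases hused c hc with h₃ | h₃ <;>
    first | exact hab (huniq hb h₁ h₂) | exact hac (huniq hc h₁ h₃) | exact hbc (huniq hc h₂ h₃)

theorem exists_involutive_adj_mulCayley_deleteEdges (hX : ∀ g ∈ X, g * g = 1) (hX1 : 1 ∉ X)
    {a b c : Γ} (ha : a ∈ X) (hb : b ∈ X) (hc : c ∈ X) (hab : a ≠ b) (hac : a ≠ c) (hbc : b ≠ c)
    (e₁ e₂ : Sym2 Γ) :
    ∃ σ : Γ → Γ, Involutive σ ∧ ∀ x, ((mulCayley X).deleteEdges {e₁, e₂}).Adj x (σ x) := by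
  obtain ⟨g, hg, hmiss⟩ := exists_mem_forall_sym2_mk_mul_notMem hX ha hb hc hab hac hbc e₁ e₂
  exact ⟨(· * g), fun x => by simp [mul_assoc, hX g hg],
    fun x => deleteEdges_adj.2 ⟨mulCayley_adj_mul hg (ne_of_mem_of_not_mem hg hX1) x, hmiss x⟩⟩

lemma mem_closure_image_mul_of_map_eq_one [Finite Γ] (hX : ∀ g ∈ X, g * g = 1)
    (hgen : Submonoid.closure X = ⊤) (χ : Γ →* ℤˣ) (hχ : ∀ g ∈ X, χ g = -1) {s : Γ} (hs : s ∈ X)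
    {g : Γ} (hg : χ g = 1) : g ∈ Submonoid.closure ((s * ·) '' X) := by
  set K := Subgroup.closure ((s * ·) '' X)
  have hK : K ≤ χ.ker := (Subgroup.closure_le _).2 <| by
    rintro _ ⟨t, ht, rfl⟩
    simp [hχ s hs, hχ t ht]
  have hcoset : ∀ h ∈ Submonoid.closure X, h ∈ K ∨ s * h ∈ K := by
    intro h hh
    induction hh using Submonoid.closure_induction_left with
    | one => exact Or.inl K.one_mem
    | mul_left t ht h _ ih =>
      have hst : s * t ∈ K := Subgroup.subset_closure ⟨t, ht, rfl⟩
      rcases ih with ih | ih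
      · exact Or.inr (by rw [← mul_assoc]; exact K.mul_mem hst ih)
      · refine Or.inl ?_
        have : t * h = (s * t)⁻¹ * (s * h) := by
          rw [mul_inv_rev, mul_assoc, inv_mul_cancel_left, inv_eq_of_mul_eq_one_right (hX t ht)]
        rw [this]
        exact K.mul_mem (K.inv_mem hst) ih
  rcases hcoset g (hgen ▸ Submonoid.mem_top g) with hgK | hsgK
  · rwa [← Subgroup.closure_toSubmonoid_of_finite]
  · have := hK hsgK
    simp [hχ s hs, hg] at this

theorem exists_isPairing_mulCayley_fixedPoints_eq_pair [Finite Γ] [DecidableEq Γ]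
    (hX : ∀ g ∈ X, g * g = 1) (hgen : Submonoid.closure X = ⊤) (hne : X.Nonempty)
    (χ : Γ →* ℤˣ) (hχ : ∀ g ∈ X, χ g = -1) {u v : Γ} (huv : χ u ≠ χ v) :
    ∃ p, (mulCayley X).IsPairing p ∧ fixedPoints p = {u, v} := by
  obtain ⟨s, hs⟩ := hne
  have hX1 : ∀ g ∈ X, g ≠ 1 := fun g hg h => by simpa [h] using hχ g hg
  let σ : Γ → Γ := (· * s)
  have hσ : Involutive σ := fun x => by simp [σ, mul_assoc, hX s hs]
  have hadj : ∀ x, (mulCayley X).Adj x (σ x) := mulCayley_adj_mul hs (hX1 s hs)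
  have hχσ : ∀ x, χ (σ x) = -χ x := fun x => by simp [σ, hχ s hs]
  -- the alternating path ends at `v * s`, whose partner under `σ` is `v`
  have hreach : Relation.ReflTransGen (fun x y => (mulCayley X).Adj (σ x) y) u (v * s) := by
    have hw : u⁻¹ * (v * s) ∈ Submonoid.closure ((s * ·) '' X) := by
      refine mem_closure_image_mul_of_map_eq_one hX hgen χ hχ hs ?_
      rw [map_mul, map_inv, hχσ, Int.units_ne_iff_eq_neg.1 huv, inv_mul_cancel]
    refine mul_inv_cancel_left u (v * s) ▸ Relation.ReflTransGen.mono (fun x y hxy => ?_) _ _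
      (Submonoid.reflTransGen_mul_of_mem_closure hw u)
    obtain ⟨_, ⟨t, ht, rfl⟩, rfl⟩ := hxy
    rw [← mul_assoc]
    exact mulCayley_adj_mul ht (hX1 t ht) _
  obtain ⟨l, hchain, hnd, hlast⟩ := hreach.exists_isChain_cons_nodup
  have hcol : ∀ x ∈ u :: l, χ x = χ u :=
    hchain.induction _ _ (fun x y hxy hx => by
      rw [map_eq_neg_of_mulCayley_adj χ hχ hxy, hχσ, neg_neg, hx]) (fun _ => rfl)
  have hsep : ∀ x ∈ u :: l, σ x ∉ u :: l := fun x hx hσx =>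
    units_ne_neg_self (χ u) <| calc
      χ u = χ (σ x) := (hcol _ hσx).symm
      _ = -χ u := by rw [hχσ, hcol x hx]
  obtain ⟨p, hp, hfix, -⟩ := exists_isPairing_of_isChain hσ hadj u l hchain hnd hsep hlast
  exact ⟨p, hp, by rw [hfix, hσ]⟩

end Cayley

end SimpleGraph

open SimpleGraph

section

def bsGens (n : ℕ) : Set (Perm (Fin n)) :=
  {g | (∃ i : Fin n, (i : ℕ) ≠ 0 ∧ g = swap ⟨0, i.pos⟩ i) ∨
    ∃ i j : Fin n, (i : ℕ) + 1 = (j : ℕ) ∧ 1 ≤ (i : ℕ) ∧ g = swap i j}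

variable {n : ℕ}

lemma bssRel_iff {u v : Perm (Fin n)} : bssRel n u v ↔ ∃ g ∈ bsGens n, v * g = u := by
  constructor
  · rintro (⟨i, hi, rfl⟩ | ⟨i, j, hij, hi, rfl⟩)
    exacts [⟨_, Or.inl ⟨i, hi, rfl⟩, rfl⟩, ⟨_, Or.inr ⟨i, j, hij, hi, rfl⟩, rfl⟩]
  · rintro ⟨g, ⟨i, hi, rfl⟩ | ⟨i, j, hij, hi, rfl⟩, rfl⟩
    exacts [Or.inl ⟨i, hi, rfl⟩, Or.inr ⟨i, j, hij, hi, rfl⟩]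

lemma BS_eq_mulCayley : BS n = mulCayley (bsGens n) := by
  ext u v
  rw [BS, mulCayley, fromRel_adj, fromRel_adj, bssRel_iff, bssRel_iff, or_comm]

lemma isSwap_of_mem_bsGens {g : Perm (Fin n)} (hg : g ∈ bsGens n) : g.IsSwap := by
  rcases hg with ⟨i, hi, rfl⟩ | ⟨i, j, hij, -, rfl⟩
  · exact ⟨_, i, fun h => hi (congrArg Fin.val h).symm, rfl⟩
  · exact ⟨i, j, fun h => by have := congrArg Fin.val h; omega, rfl⟩

lemma mul_self_of_mem_bsGens {g : Perm (Fin n)} (hg : g ∈ bsGens n) : g * g = 1 := by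
  obtain ⟨x, y, -, rfl⟩ := isSwap_of_mem_bsGens hg
  exact swap_mul_self x y

lemma one_notMem_bsGens : 1 ∉ bsGens n := fun h => by
  simpa using (isSwap_of_mem_bsGens h).sign_eq

lemma mclosure_bsGens : Submonoid.closure (bsGens n) = ⊤ := by
  obtain _ | m := n
  · exact Subsingleton.elim _ _
  refine top_unique ((Perm.mclosure_swap_castSucc_succ m).ge.trans (Submonoid.closure_mono ?_))
  rintro _ ⟨i, rfl⟩
  by_cases hi : (i : ℕ) = 0
  · have h0 : i.castSucc = ⟨0, i.succ.pos⟩ := Fin.ext hi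
    exact Or.inl ⟨i.succ, by simp, by simp only [h0]⟩
  · exact Or.inr ⟨i.castSucc, i.succ, by simp, by simp; omega, rfl⟩

lemma exists_three_mem_bsGens (hn : 3 ≤ n) : ∃ a ∈ bsGens n, ∃ b ∈ bsGens n, ∃ c ∈ bsGens n,
    a ≠ b ∧ a ≠ c ∧ b ≠ c := by
  let x : Fin n := ⟨0, by omega⟩
  let y : Fin n := ⟨1, by omega⟩
  let z : Fin n := ⟨2, by omega⟩
  refine ⟨swap x y, Or.inl ⟨y, by simp [y], rfl⟩, swap x z, Or.inl ⟨z, by simp [z], rfl⟩,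
    swap y z, Or.inr ⟨y, z, rfl, le_rfl, rfl⟩, fun h => ?_, fun h => ?_, fun h => ?_⟩ <;>
  · have := congrArg (· y) h
    simp [swap_apply_def, x, y, z, Fin.ext_iff] at this

theorem exists_involutive_adj_BS_deleteEdges (hn : 3 ≤ n) (e₁ e₂ : Sym2 (Perm (Fin n))) :
    ∃ σ : Perm (Fin n) → Perm (Fin n), Involutive σ ∧
      ∀ x, ((BS n).deleteEdges {e₁, e₂}).Adj x (σ x) := by
  obtain ⟨a, ha, b, hb, c, hc, hab, hac, hbc⟩ := exists_three_mem_bsGens hn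
  rw [BS_eq_mulCayley]
  exact exists_involutive_adj_mulCayley_deleteEdges (fun _ => mul_self_of_mem_bsGens)
    one_notMem_bsGens ha hb hc hab hac hbc e₁ e₂

theorem exists_isPairing_BS_fixedPoints_eq_pair (hn : 2 ≤ n) {u v : Perm (Fin n)}
    (huv : Perm.sign u ≠ Perm.sign v) : ∃ p, (BS n).IsPairing p ∧ fixedPoints p = {u, v} := by
  rw [BS_eq_mulCayley]
  exact exists_isPairing_mulCayley_fixedPoints_eq_pair (fun _ => mul_self_of_mem_bsGens)
    mclosure_bsGens ⟨_, Or.inl ⟨⟨1, hn⟩, one_ne_zero, rfl⟩⟩ Perm.sign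
    (fun _ hg => (isSwap_of_mem_bsGens hg).sign_eq) huv

end

/-- For every `n ≥ 3`, every optimal strong matching preclusion set of `BS_n`
(one of size `smp(BS_n) = 2`) consists of no edges and two distinct vertices of the
same parity (i.e. lying in the same bipartition class of `BS_n`). -/
theorem smp_bubbleSortStar_optimal (n : ℕ) (hn : 3 ≤ n)
    (S : Set (Equiv.Perm (Fin n))) (F : Set (Sym2 (Equiv.Perm (Fin n))))
    (hSF : IsSMPSet (BS n) S F) (hopt : S.ncard + F.ncard = 2) :
    F = ∅ ∧ ∃ u v : Equiv.Perm (Fin n), u ≠ v ∧ S = {u, v} ∧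
      Equiv.Perm.sign u = Equiv.Perm.sign v := by
  obtain ⟨-, hnoPM, hnoAPM⟩ := hSF
  have hsizes : S.ncard = 0 ∧ F.ncard = 2 ∨ S.ncard = 1 ∧ F.ncard = 1 ∨
      S.ncard = 2 ∧ F.ncard = 0 := by omega
  rcases hsizes with ⟨hS, hF⟩ | ⟨hS, hF⟩ | ⟨hS, hF⟩
  · obtain rfl := (Set.ncard_eq_zero (s := S)).1 hS
    obtain ⟨e₁, e₂, -, rfl⟩ := Set.ncard_eq_two.1 hF
    obtain ⟨σ, hσ, hadj⟩ := exists_involutive_adj_BS_deleteEdges hn e₁ e₂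
    obtain ⟨hp, hfix⟩ := isPairing_of_forall_adj hσ hadj
    exact (hnoPM (hp.exists_isPM_induce hfix)).elim
  · obtain ⟨u, rfl⟩ := Set.ncard_eq_one.1 hS
    obtain ⟨e, rfl⟩ := Set.ncard_eq_one.1 hF
    obtain ⟨σ, hσ, hadj⟩ := exists_involutive_adj_BS_deleteEdges hn e e
    rw [Set.pair_eq_singleton] at hadj
    obtain ⟨p, hp, hfix, -⟩ := exists_isPairing_fixedPoints_pair hσ hadj u
    exact (hnoAPM (hp.exists_isAPM_induce (hadj u).ne' (by rw [hfix, Set.pair_comm]))).elim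
  · obtain ⟨u, v, huv, rfl⟩ := Set.ncard_eq_two.1 hS
    obtain rfl := (Set.ncard_eq_zero (s := F)).1 hF
    refine ⟨rfl, u, v, huv, rfl, by_contra fun hsign => hnoPM ?_⟩
    obtain ⟨p, hp, hfix⟩ := exists_isPairing_BS_fixedPoints_eq_pair (by omega) hsign
    rw [deleteEdges_empty]
    exact hp.exists_isPM_induce hfix
end

section
/- Every optimal matching preclusion set of the 3-dimensional bubble-sort star graph BS_3 is trivial: if F ⊆ E(BS_3) has |F| = mp(BS_3) = 3 and BS_3 − F has no perfect matching, then there is a vertex u of BS_3 such that every edge of F is incident with u (so F is the set of all three edges incident with u). -/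
namespace MPaux
abbrev P3 := Equiv.Perm (Fin 3)
instance : DecidableRel (bssRel 3) := fun u v => by unfold bssRel; infer_instance
instance : DecidableRel (BS 3).Adj := fun u v =>
  decidable_of_iff (u ≠ v ∧ (bssRel 3 u v ∨ bssRel 3 v u)) (SimpleGraph.fromRel_adj _ _ _).symm
instance : DecidablePred (· ∈ (BS 3).edgeSet) := inferInstance
def t01 : P3 := Equiv.swap 0 1
def t02 : P3 := Equiv.swap 0 2
def t12 : P3 := Equiv.swap 1 2
def c : P3 := t01 * t12
def L : List (Sym2 P3) :=
  [s(1, t01), s(1, t02), s(1, t12),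
   s(c, t01), s(c, t02), s(c, t12),
   s(c*c, t01), s(c*c, t02), s(c*c, t12)]
def PML : List (Finset (Sym2 P3)) :=
  [{s(1, t01), s(c, t02), s(c*c, t12)},
   {s(1, t01), s(c, t12), s(c*c, t02)},
   {s(1, t02), s(c, t01), s(c*c, t12)},
   {s(1, t02), s(c, t12), s(c*c, t01)},
   {s(1, t12), s(c, t01), s(c*c, t02)},
   {s(1, t12), s(c, t02), s(c*c, t01)}]

instance {α : Type*} {p : α → Prop} [DecidableEq α] [Fintype α] [DecidablePred p] :
    Decidable (∃! a, p a) :=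
  decidable_of_iff (∃ a, p a ∧ ∀ b, p b → b = a) Iff.rfl

lemma mem_edges : ∀ e, e ∈ (BS 3).edgeSet ↔ e ∈ L := by decide

lemma pm_valid : ∀ M ∈ PML,
    (∀ e ∈ M, e ∈ (BS 3).edgeSet) ∧ ∀ v : P3, ∃! e, e ∈ M ∧ v ∈ e := by decide

set_option synthInstance.maxSize 400 in
set_option synthInstance.maxHeartbeats 400000 in
set_option maxHeartbeats 2000000 in
lemma key : ∀ e1 ∈ L, ∀ e2 ∈ L, ∀ e3 ∈ L,
    e1 ≠ e2 → e1 ≠ e3 → e2 ≠ e3 →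
    (¬ ∃ u : P3, u ∈ e1 ∧ u ∈ e2 ∧ u ∈ e3) →
    ∃ M ∈ PML, e1 ∉ M ∧ e2 ∉ M ∧ e3 ∉ M := by decide
end MPaux

open MPaux in
/-- Every optimal matching preclusion set of `BS_3` is trivial: if `F ⊆ E(BS_3)` has
`|F| = mp(BS_3) = 3` and `BS_3 - F` has no perfect matching, then all edges of `F`
are incident with one common vertex `u`. -/
theorem mp_bubbleSortStar_three_optimal_trivial
    (F : Set (Sym2 (Equiv.Perm (Fin 3)))) (hF : F ⊆ (BS 3).edgeSet)
    (hcard : F.ncard = 3)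
    (hnoPM : ¬ ∃ M, IsPM ((BS 3).deleteEdges F) M) :
    ∃ u : Equiv.Perm (Fin 3), ∀ e ∈ F, u ∈ e := by
  classical
  by_contra hcon
  have hfin : F.Finite := Set.toFinite F
  obtain ⟨e1, e2, e3, h12, h13, h23, hFeq⟩ := Finset.card_eq_three.mp
    (by rw [← Set.ncard_eq_toFinset_card F hfin]; exact hcard)
  have hmemF : ∀ e, e ∈ F ↔ (e = e1 ∨ e = e2 ∨ e = e3) := by
    intro e
    rw [← hfin.mem_toFinset, hFeq]
    simp
  have hL : ∀ e ∈ F, e ∈ L := fun e he => (mem_edges e).mp (hF he)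
  have hnc : ¬ ∃ u : P3, u ∈ e1 ∧ u ∈ e2 ∧ u ∈ e3 := by
    rintro ⟨u, hu1, hu2, hu3⟩
    exact hcon ⟨u, fun e he => by
      rcases (hmemF e).mp he with rfl | rfl | rfl <;> assumption⟩
  obtain ⟨M, hMP, hM1, hM2, hM3⟩ := key e1 (hL e1 ((hmemF e1).mpr (Or.inl rfl)))
    e2 (hL e2 ((hmemF e2).mpr (Or.inr (Or.inl rfl))))
    e3 (hL e3 ((hmemF e3).mpr (Or.inr (Or.inr rfl)))) h12 h13 h23 hnc
  obtain ⟨hedge, huniq⟩ := pm_valid M hMP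
  refine hnoPM ⟨↑M, ?_, ?_⟩
  · intro e he
    rw [Finset.mem_coe] at he
    rw [SimpleGraph.edgeSet_deleteEdges]
    refine ⟨hedge e he, fun heF => ?_⟩
    rcases (hmemF e).mp heF with rfl | rfl | rfl
    · exact hM1 he
    · exact hM2 he
    · exact hM3 he
  · intro v
    simpa using huniq v
end

section
/- For every integer n ≥ 3, every optimal matching preclusion set of the n-dimensional bubble-sort star graph BS_n is trivial: if F ⊆ E(BS_n) has |F| = mp(BS_n) = 2n − 3 and BS_n − F has no perfect matching, then there is a vertex u of BS_n such that every edge of F is incident with u (so F is the set of all 2n − 3 edges incident with u). -/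
/-!
Colour the edge `{v, v t}` of `BS_n` by the generating transposition `t`. Each colour class is a
perfect matching, so `F` meets all `2n - 3` of them and consists of one edge `{u_t, u_t t}` of
each colour. Switching between two colours `g, h` on a left coset of `⟨g, h⟩` gives another
perfect matching; it avoids `F` unless `u_g⁻¹ u_h ∈ ⟨g, h⟩`. Hence `u_t c = u_t' c` whenever `t`
and `t'` both fix `c`, and for `n ≥ 4` the two disjoint generators `⟨1, 2⟩, ⟨3, 4⟩` glue these
values into one permutation `w` that agrees with each `u_t` off the support of `t`, i.e.
`w ∈ {u_t, u_t t}`. For `n = 3` the cosets give nothing, but `BS_3 = K_{3,3}` has the perfect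
matchings `v ↦ s v` for every transposition `s`, and these make `t ↦ u_t t u_t⁻¹` bijective,
which again produces such a `w`.
-/

open Equiv Function

section InvolutionMatching

variable {V : Type*} {G : SimpleGraph V} {F : Set (Sym2 V)}

theorem isPM_range_of_involutive {σ : V → V} (hσ : Involutive σ) (hadj : ∀ v, G.Adj v (σ v)) :
    IsPM G (Set.range fun v => s(v, σ v)) := by
  refine ⟨?_, fun v => ⟨s(v, σ v), ⟨⟨v, rfl⟩, Sym2.mem_mk_left _ _⟩, ?_⟩⟩
  · rintro _ ⟨v, rfl⟩
    exact hadj v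
  · rintro _ ⟨⟨w, rfl⟩, hv⟩
    rcases Sym2.mem_iff.1 hv with rfl | rfl
    · rfl
    · rw [hσ w, Sym2.eq_swap]

theorem exists_mk_mem_of_involutive (hF : ¬∃ M, IsPM (G.deleteEdges F) M) {σ : V → V}
    (hσ : Involutive σ) (hadj : ∀ v, G.Adj v (σ v)) : ∃ v, s(v, σ v) ∈ F := by
  by_contra! hmiss
  exact hF ⟨_, isPM_range_of_involutive hσ fun v =>
    SimpleGraph.deleteEdges_adj.2 ⟨hadj v, hmiss v⟩⟩

end InvolutionMatching

section CayleyMatching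

variable {Γ ι : Type*} [Group Γ] {G : SimpleGraph Γ} {F : Set (Sym2 Γ)} {τ : ι → Γ}

theorem involutive_mul_right {t : Γ} (ht : t * t = 1) : Involutive (· * t) := fun v => by
  simp only [mul_assoc, ht, mul_one]

theorem involutive_mul_left {t : Γ} (ht : t * t = 1) : Involutive (t * ·) := fun v => by
  simp only [← mul_assoc, ht, one_mul]

theorem mk_mul_eq_mk_mul (hτ : ∀ k, τ k * τ k = 1) (hinj : Injective τ) {v w : Γ} {k l : ι}
    (h : s(v, v * τ k) = s(w, w * τ l)) : k = l ∧ (w = v ∨ w = v * τ k) := by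
  rcases Sym2.eq_iff.1 h with ⟨rfl, h⟩ | ⟨rfl, h⟩
  · exact ⟨hinj (mul_left_cancel h), Or.inl rfl⟩
  · refine ⟨hinj (mul_left_cancel (a := τ l) ?_), Or.inr h.symm⟩
    rw [hτ, ← mul_eq_left (a := w), ← mul_assoc, h]

theorem exists_mk_mul_mem (hF : ¬∃ M, IsPM (G.deleteEdges F) M) (hτ : ∀ k, τ k * τ k = 1)
    (hG : ∀ v k, G.Adj v (v * τ k)) (k : ι) : ∃ v, s(v, v * τ k) ∈ F :=
  exists_mk_mem_of_involutive hF (involutive_mul_right (hτ k)) (hG · k)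

theorem inv_mul_mem_closure_pair (hF : ¬∃ M, IsPM (G.deleteEdges F) M)
    (hτ : ∀ k, τ k * τ k = 1) (hinj : Injective τ) (hG : ∀ v k, G.Adj v (v * τ k))
    {u : ι → Γ} (hFu : F ⊆ Set.range fun k => s(u k, u k * τ k)) (k l : ι) :
    (u k)⁻¹ * u l ∈ Subgroup.closure {τ k, τ l} := by
  classical
  set H := Subgroup.closure {τ k, τ l}
  have hkH : τ k ∈ H := Subgroup.subset_closure (by simp)
  have hlH : τ l ∈ H := Subgroup.subset_closure (by simp)
  let C : Set Γ := {v | (u k)⁻¹ * v ∈ H}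
  have hC : ∀ {v t}, t ∈ H → (v * t ∈ C ↔ v ∈ C) := fun {v _} ht => by
    show (u k)⁻¹ * (v * _) ∈ H ↔ _
    rw [← mul_assoc]
    exact H.mul_mem_cancel_right ht
  have hukC : u k ∈ C := by simp [C, H.one_mem]
  by_contra hul
  -- Colour `τ l` on the coset `C = u k H` and `τ k` off it: the `τ k`-edge of `F` lies in `C`,
  -- and by assumption its `τ l`-edge does not.
  let σ : Γ → Γ := fun v => if v ∈ C then v * τ l else v * τ k
  have hσ : Involutive σ := fun v => by
    by_cases hv : v ∈ C
    · simp [σ, hv, hC hlH, mul_assoc, hτ]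
    · simp [σ, hv, hC hkH, mul_assoc, hτ]
  obtain ⟨v, hv⟩ := exists_mk_mem_of_involutive hF hσ fun v => by
    by_cases hv : v ∈ C <;> simp [σ, hv, hG]
  obtain ⟨m, hm⟩ := hFu hv
  by_cases hvC : v ∈ C
  · simp only [σ, hvC, if_true] at hm
    obtain ⟨rfl, h⟩ := mk_mul_eq_mk_mul hτ hinj hm.symm
    exact hul (h.elim (· ▸ hvC) (· ▸ (hC hlH).2 hvC))
  · simp only [σ, hvC, if_false] at hm
    obtain ⟨rfl, h⟩ := mk_mul_eq_mk_mul hτ hinj hm.symm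
    exact hvC (h.elim (· ▸ hukC) fun h => (hC hkH).1 (h ▸ hukC))

theorem exists_eq_conj (hF : ¬∃ M, IsPM (G.deleteEdges F) M) (hτ : ∀ k, τ k * τ k = 1)
    {u : ι → Γ} (hFu : F ⊆ Set.range fun k => s(u k, u k * τ k)) {s : Γ} (hs : s * s = 1)
    (hG : ∀ v, G.Adj v (s * v)) : ∃ k, s = u k * τ k * (u k)⁻¹ := by
  obtain ⟨v, hv⟩ := exists_mk_mem_of_involutive hF (involutive_mul_left hs) hG
  obtain ⟨k, hk⟩ := hFu hv
  refine ⟨k, ?_⟩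
  rcases Sym2.eq_iff.1 hk with ⟨rfl, h⟩ | ⟨h₁, h₂⟩
  · rw [h, mul_inv_cancel_right]
  · calc s = u k * (u k * τ k)⁻¹ := by rw [h₂, h₁, mul_inv_cancel_right]
      _ = u k * τ k * (u k)⁻¹ := by
        rw [mul_inv_rev, inv_eq_of_mul_eq_one_right (hτ k), mul_assoc]

end CayleyMatching

theorem Subgroup.exists_zpow_mul_zpow_of_mem_closure_pair {G : Type*} [Group G] {x y z : G}
    (hxy : Commute x y) (hz : z ∈ Subgroup.closure {x, y}) : ∃ m n : ℤ, x ^ m * y ^ n = z := by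
  induction hz using Subgroup.closure_induction with
  | mem g hg =>
    rcases hg with rfl | rfl
    · exact ⟨1, 0, by simp⟩
    · exact ⟨0, 1, by simp⟩
  | one => exact ⟨0, 0, by simp⟩
  | mul g h _ _ hg hh =>
    obtain ⟨m, n, rfl⟩ := hg
    obtain ⟨m', n', rfl⟩ := hh
    refine ⟨m + m', n + n', ?_⟩
    rw [zpow_add, zpow_add, mul_assoc, ← mul_assoc (x ^ m'), (hxy.zpow_zpow m' n).eq]
    simp only [mul_assoc]
  | inv g _ hg =>
    obtain ⟨m, n, rfl⟩ := hg
    refine ⟨-m, -n, ?_⟩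
    rw [mul_inv_rev, zpow_neg, zpow_neg, ((hxy.zpow_zpow m n).inv_inv).eq]

namespace Equiv.Perm

variable {α ι : Type*}

theorem apply_eq_self_of_mem_closure {s : Set (Perm α)} {y : Perm α} {c : α}
    (hy : y ∈ Subgroup.closure s) (hs : ∀ g ∈ s, g c = c) : y c = c :=
  (Subgroup.closure_le (MulAction.stabilizer (Perm α) c)).2 hs hy

theorem apply_eq_of_inv_mul_mem_closure_pair {x y g h : Perm α} {c : α}
    (hxy : x⁻¹ * y ∈ Subgroup.closure {g, h}) (hg : g c = c) (hh : h c = c) : y c = x c := by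
  have := apply_eq_self_of_mem_closure (c := c) hxy (by simp [hg, hh])
  rwa [mul_apply, inv_eq_iff_eq] at this

theorem IsSwap.eq_one_or_eq_of_apply_eq_self [DecidableEq α] {t y : Perm α} (ht : t.IsSwap)
    (hy : ∀ c, t c = c → y c = c) : y = 1 ∨ y = t := by
  obtain ⟨i, j, hij, rfl⟩ := ht
  have hfix : ∀ c, c ≠ i → c ≠ j → y c = c := fun c hi hj => hy c (swap_apply_of_ne_of_ne hi hj)
  have eq_one : ∀ z : Perm α, (∀ c, c ≠ i → c ≠ j → z c = c) → z i = i → z = 1 := by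
    intro z hz hzi
    have hzj : z j = j := by
      by_contra h
      exact h (z.injective (hz _ (fun h' => hij (z.injective (h'.trans hzi.symm)).symm) h))
    ext c
    by_cases hci : c = i
    · simp [hci, hzi]
    by_cases hcj : c = j
    · simp [hcj, hzj]
    simp [hz c hci hcj]
  rcases eq_or_ne (y i) i with hi | hi
  · exact Or.inl (eq_one y hfix hi)
  · have hyi : y i = j := by
      by_contra h
      exact hi (y.injective (hfix _ hi h))
    have := eq_one (swap i j * y) (fun c hci hcj => by
      simp [hfix c hci hcj, swap_apply_of_ne_of_ne hci hcj]) (by simp [hyi])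
    rw [eq_inv_of_mul_eq_one_right this, swap_inv]
    exact Or.inr rfl

theorem eq_or_eq_mul_of_forall_apply_eq [DecidableEq α] {τ u : ι → Perm α}
    (hτ : ∀ k, (τ k).IsSwap) {w : Perm α} (hw : ∀ k c, τ k c = c → u k c = w c) (k : ι) :
    w = u k ∨ w = u k * τ k := by
  have hfix : ∀ c, τ k c = c → ((u k)⁻¹ * w) c = c := fun c hc => by
    rw [mul_apply, ← hw k c hc, inv_eq_iff_eq]
  rcases (hτ k).eq_one_or_eq_of_apply_eq_self hfix with h | h
  · exact Or.inl (inv_mul_eq_one.1 h).symm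
  · exact Or.inr (inv_mul_eq_iff_eq_mul.1 h)

theorem exists_forall_apply_eq_of_disjoint {τ u : ι → Perm α}
    (hu : ∀ k l, (u k)⁻¹ * u l ∈ Subgroup.closure {τ k, τ l}) {a b : ι}
    (hab : (τ a).Disjoint (τ b)) : ∃ w : Perm α, ∀ k c, τ k c = c → u k c = w c := by
  obtain ⟨m, n, hmn⟩ := Subgroup.exists_zpow_mul_zpow_of_mem_closure_pair hab.commute (hu a b)
  have hw : u a * τ a ^ m = u b * (τ b ^ n)⁻¹ := by
    rw [← mul_inv_cancel_left (u a) (u b), ← hmn, mul_assoc, mul_inv_cancel_right]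
  refine ⟨u a * τ a ^ m, fun k c hk => ?_⟩
  rcases hab c with ha | hb
  · rw [apply_eq_of_inv_mul_mem_closure_pair (hu a k) ha hk, mul_apply,
      zpow_apply_eq_self_of_apply_eq_self ha]
  · rw [hw, apply_eq_of_inv_mul_mem_closure_pair (hu b k) hb hk, mul_apply, ← zpow_neg,
      zpow_apply_eq_self_of_apply_eq_self hb]

theorem exists_forall_apply_eq_of_conj [Finite α] {τ u : ι → Perm α} (p : ι ≃ α)
    (hp : ∀ k c, τ k c = c ↔ c = p k) (hconj : ∀ m, ∃ k, τ m = u k * τ k * (u k)⁻¹) :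
    ∃ w : Perm α, ∀ k c, τ k c = c → u k c = w c := by
  have : Finite ι := .of_equiv _ p.symm
  let g : ι → α := fun k => u k (p k)
  have hg : Surjective g := fun c => by
    obtain ⟨k, hk⟩ := hconj (p.symm c)
    refine ⟨k, ((hp _ _).1 ?_).trans (p.apply_symm_apply c)⟩
    simp [g, hk, (hp k (p k)).2 rfl]
  have hbij : Bijective g := hg.bijective_of_nat_card_le (Nat.card_congr p).le
  refine ⟨p.symm.trans (Equiv.ofBijective g hbij), fun k c hc => ?_⟩
  obtain rfl := (hp k c).1 hc
  simp [g]

end Equiv.Perm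

namespace BS

-- In the paper's 1-based notation, `inl i` is `⟨1, i + 2⟩` and `inr i` is `⟨i + 2, i + 3⟩`.
def gen (n : ℕ) : Fin (n - 1) ⊕ Fin (n - 2) → Perm (Fin n)
  | .inl i => swap ⟨0, by have := i.isLt; omega⟩ ⟨i + 1, by have := i.isLt; omega⟩
  | .inr i => swap ⟨i + 1, by have := i.isLt; omega⟩ ⟨i + 2, by have := i.isLt; omega⟩

variable {n : ℕ}

theorem gen_isSwap (k : Fin (n - 1) ⊕ Fin (n - 2)) : (gen n k).IsSwap := by
  rcases k with i | i <;> exact ⟨_, _, by simp [Fin.ext_iff], rfl⟩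

theorem gen_mul_self (k : Fin (n - 1) ⊕ Fin (n - 2)) : gen n k * gen n k = 1 := by
  obtain ⟨i, j, -, hk⟩ := gen_isSwap k
  rw [hk, swap_mul_self]

theorem gen_ne_one (k : Fin (n - 1) ⊕ Fin (n - 2)) : gen n k ≠ 1 := by
  obtain ⟨i, j, hij, hk⟩ := gen_isSwap k
  rwa [hk, Ne, swap_eq_one_iff]

theorem gen_injective : Injective (gen n) := by
  rintro (⟨i, hi⟩ | ⟨i, hi⟩) (⟨j, hj⟩ | ⟨j, hj⟩) h
  · have := DFunLike.congr_fun h ⟨0, by omega⟩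
    simp [gen, swap_apply_left] at this
    simp [this]
  · have := DFunLike.congr_fun h ⟨0, by omega⟩
    simp [gen, swap_apply_def, Fin.ext_iff] at this
  · have := DFunLike.congr_fun h ⟨0, by omega⟩
    simp [gen, swap_apply_def, Fin.ext_iff] at this
  · have := DFunLike.congr_fun h ⟨i + 1, by omega⟩
    simp [gen, swap_apply_def, Fin.ext_iff] at this
    split_ifs at this <;> simp_all

theorem nat_card_gen_domain : Nat.card (Fin (n - 1) ⊕ Fin (n - 2)) = 2 * n - 3 := by
  rw [Nat.card_sum, Nat.card_eq_fintype_card, Nat.card_eq_fintype_card, Fintype.card_fin,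
    Fintype.card_fin]
  omega

theorem adj_mul_gen (v : Perm (Fin n)) (k : Fin (n - 1) ⊕ Fin (n - 2)) :
    (BS n).Adj v (v * gen n k) := by
  rw [BS, SimpleGraph.fromRel_adj]
  refine ⟨fun h => gen_ne_one k (mul_eq_left.1 h.symm), Or.inr ?_⟩
  rcases k with i | i
  · exact Or.inl ⟨_, by simp, rfl⟩
  · exact Or.inr ⟨_, _, rfl, by simp, rfl⟩

theorem gen_disjoint (hn : 4 ≤ n) :
    (gen n (.inl ⟨0, by omega⟩)).Disjoint (gen n (.inr ⟨1, by omega⟩)) :=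
  Perm.disjoint_swap_swap (by simp [Fin.ext_iff])

theorem exists_gen_three_eq_swap : ∀ i j : Fin 3, i ≠ j → ∃ k, gen 3 k = swap i j := by
  decide

theorem adj_gen_three_mul (v : Perm (Fin 3)) (k : Fin (3 - 1) ⊕ Fin (3 - 2)) :
    (BS 3).Adj v (gen 3 k * v) := by
  obtain ⟨i, j, hij, hk⟩ := gen_isSwap k
  obtain ⟨l, hl⟩ := exists_gen_three_eq_swap (v⁻¹ i) (v⁻¹ j) (by simpa using hij)
  have : gen 3 k * v = v * gen 3 l := by
    rw [hl, swap_apply_apply, hk]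
    group
  rw [this]
  exact adj_mul_gen v l

def fixedPointThree : Fin (3 - 1) ⊕ Fin (3 - 2) ≃ Fin 3 where
  toFun := Sum.elim ![2, 1] ![0]
  invFun := ![.inr 0, .inl 1, .inl 0]
  left_inv := by decide
  right_inv := by decide

theorem gen_three_apply_eq_self_iff :
    ∀ k c, gen 3 k c = c ↔ c = fixedPointThree k := by
  decide

end BS

theorem mp_bubbleSortStar_optimal_trivial_general (n : ℕ) (hn : 3 ≤ n)
    (F : Set (Sym2 (Equiv.Perm (Fin n))))
    (hcard : F.ncard = 2 * n - 3)
    (hnoPM : ¬ ∃ M, IsPM ((BS n).deleteEdges F) M) :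
    ∃ u : Equiv.Perm (Fin n), ∀ e ∈ F, u ∈ e := by
  choose u hu using exists_mk_mul_mem hnoPM BS.gen_mul_self BS.adj_mul_gen
  have hFu : F = Set.range fun k => s(u k, u k * BS.gen n k) := by
    have hinj : Injective fun k => s(u k, u k * BS.gen n k) := fun k l h =>
      (mk_mul_eq_mk_mul BS.gen_mul_self BS.gen_injective h).1
    refine (Set.eq_of_subset_of_ncard_le (Set.range_subset_iff.2 hu) ?_ (Set.toFinite F)).symm
    rw [hcard, Set.ncard_range_of_injective hinj, BS.nat_card_gen_domain]
  obtain ⟨w, hw⟩ : ∃ w : Perm (Fin n), ∀ k c, BS.gen n k c = c → u k c = w c := by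
    obtain rfl | hn4 : n = 3 ∨ 4 ≤ n := by omega
    · exact Perm.exists_forall_apply_eq_of_conj BS.fixedPointThree BS.gen_three_apply_eq_self_iff
        fun m => exists_eq_conj hnoPM BS.gen_mul_self hFu.subset (BS.gen_mul_self m)
          (BS.adj_gen_three_mul · m)
    · exact Perm.exists_forall_apply_eq_of_disjoint
        (inv_mul_mem_closure_pair hnoPM BS.gen_mul_self BS.gen_injective BS.adj_mul_gen hFu.subset)
        (BS.gen_disjoint hn4)
  refine ⟨w, hFu ▸ ?_⟩
  rintro _ ⟨k, rfl⟩
  rcases Perm.eq_or_eq_mul_of_forall_apply_eq BS.gen_isSwap hw k with rfl | rfl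
  · exact Sym2.mem_mk_left _ _
  · exact Sym2.mem_mk_right _ _

/-- For every `n ≥ 3`, every optimal matching preclusion set of `BS_n` is trivial:
if `F ⊆ E(BS_n)` has `|F| = mp(BS_n) = 2n - 3` and `BS_n - F` has no perfect matching,
then all edges of `F` are incident with one common vertex `u`. -/
theorem mp_bubbleSortStar_optimal_trivial (n : ℕ) (hn : 3 ≤ n)
    (F : Set (Sym2 (Equiv.Perm (Fin n)))) (hF : F ⊆ (BS n).edgeSet)
    (hcard : F.ncard = 2 * n - 3)
    (hnoPM : ¬ ∃ M, IsPM ((BS n).deleteEdges F) M) :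
    ∃ u : Equiv.Perm (Fin n), ∀ e ∈ F, u ∈ e :=
  mp_bubbleSortStar_optimal_trivial_general n hn F hcard hnoPM
end

section
/- For every integer n ≥ 3 and any two distinct indices i, j ∈ {1,…,n}, there exist 2·(n−2)! pairwise non-incident (independent) edges of BS_n joining a vertex of BS_n^i to a vertex of BS_n^j. -/
lemma card_two_point (n : ℕ) (a b x y : Fin n) (hab : a ≠ b) (hxy : x ≠ y) :
    {σ : Equiv.Perm (Fin n) | σ a = x ∧ σ b = y}.ncard = Nat.factorial (n - 2) := by
  classical
  set b' := Equiv.swap a x b with hb'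
  have hb'x : b' ≠ x := fun h => hab ((Equiv.swap a x).injective (h.trans (Equiv.swap_apply_left a x).symm)).symm
  set σ₀ : Equiv.Perm (Fin n) := Equiv.swap b' y * Equiv.swap a x with hσ₀
  have hσa : σ₀ a = x := by
    simp only [hσ₀, Equiv.Perm.mul_apply, Equiv.swap_apply_left]
    exact Equiv.swap_apply_of_ne_of_ne hb'x.symm hxy
  have hσb : σ₀ b = y := by
    simp only [hσ₀, Equiv.Perm.mul_apply, ← hb', Equiv.swap_apply_left]
  have himg : {σ : Equiv.Perm (Fin n) | σ a = x ∧ σ b = y}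
      = (fun τ => σ₀ * τ) '' {τ : Equiv.Perm (Fin n) | τ a = a ∧ τ b = b} := by
    ext σ
    constructor
    · rintro ⟨h1, h2⟩
      refine ⟨σ₀⁻¹ * σ, ⟨?_, ?_⟩, by group⟩
      · simp [Equiv.Perm.mul_apply, h1, ← hσa]
      · simp [Equiv.Perm.mul_apply, h2, ← hσb]
    · rintro ⟨τ, ⟨h1, h2⟩, rfl⟩
      constructor
      · simp [Equiv.Perm.mul_apply, h1, hσa]
      · simp [Equiv.Perm.mul_apply, h2, hσb]
  rw [himg, Set.ncard_image_of_injective _ (mul_right_injective σ₀)]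
  rw [← Nat.card_coe_set_eq]
  have e1 : {τ : Equiv.Perm (Fin n) | τ a = a ∧ τ b = b}
      ≃ Equiv.Perm {z : Fin n // z ≠ a ∧ z ≠ b} := by
    refine Equiv.trans ?_ (Equiv.Perm.subtypeEquivSubtypePerm (fun z => z ≠ a ∧ z ≠ b)).symm
    refine Equiv.subtypeEquivRight fun f => ?_
    constructor
    · rintro ⟨h1, h2⟩ z hz
      push_neg at hz
      by_cases hza : z = a
      · subst hza; exact h1
      · rw [hz hza]; exact h2
    · intro h
      exact ⟨h a (by simp), h b (by simp)⟩
  rw [Nat.card_congr e1, Nat.card_eq_fintype_card, Fintype.card_perm]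
  congr 1
  have : Fintype.card {z : Fin n // z ≠ a ∧ z ≠ b}
      = (Finset.univ.filter (fun z : Fin n => z ≠ a ∧ z ≠ b)).card := Fintype.card_subtype _
  rw [this]
  have hfil : Finset.univ.filter (fun z : Fin n => z ≠ a ∧ z ≠ b)
      = Finset.univ \ {a, b} := by
    ext z; simp [and_comm]
  rw [hfil, Finset.card_sdiff_of_subset (by simp), Finset.card_pair hab]
  simp

/-- For every `n ≥ 3` and distinct `i, j`, there exist `2·(n-2)!` pairwise
non-incident (independent) edges of `BS_n` joining a vertex of `BS_n^i` to a vertex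
of `BS_n^j`. -/
theorem independent_edges_between_slices (n : ℕ) (hn : 3 ≤ n) (i j : Fin n)
    (hij : i ≠ j) :
    ∃ E0 : Set (Sym2 (Equiv.Perm (Fin n))),
      E0 ⊆ (BS n).edgeSet ∧
      E0.ncard = 2 * Nat.factorial (n - 2) ∧
      (∀ e ∈ E0, ∃ u v : Equiv.Perm (Fin n),
        e = s(u, v) ∧ u ∈ BSslice i ∧ v ∈ BSslice j) ∧
      E0.Pairwise (fun e f => ∀ x : Equiv.Perm (Fin n), ¬(x ∈ e ∧ x ∈ f)) := by
  classical
  have h1 : n - 1 < n := by omega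
  have h2 : n - 2 < n := by omega
  have h0 : 0 < n := by omega
  set N : Fin n := ⟨n - 1, h1⟩ with hN
  set P : Fin n := ⟨n - 2, h2⟩ with hP
  set Z : Fin n := ⟨0, h0⟩ with hZ
  have hPN : P ≠ N := by simp only [hP, hN, Fin.mk.injEq, Ne]; omega
  have hZN : Z ≠ N := by simp only [hZ, hN, Fin.mk.injEq, Ne]; omega
  have hZP : Z ≠ P := by simp only [hZ, hP, Fin.mk.injEq, Ne]; omega
  set t : Equiv.Perm (Fin n) := Equiv.swap P N with ht
  set s : Equiv.Perm (Fin n) := Equiv.swap Z N with hs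
  have htN : t N = P := Equiv.swap_apply_right _ _
  have htP : t P = N := Equiv.swap_apply_left _ _
  have htZ : t Z = Z := Equiv.swap_apply_of_ne_of_ne hZP hZN
  have hsN : s N = Z := Equiv.swap_apply_right _ _
  have hsZ : s Z = N := Equiv.swap_apply_left _ _
  have hsP : s P = P := Equiv.swap_apply_of_ne_of_ne hZP.symm hPN
  have app : ∀ {g h : Equiv.Perm (Fin n)}, g = h → ∀ a : Fin n, g a = h a :=
    fun e a => by rw [e]
  set S₁ : Set (Equiv.Perm (Fin n)) := {v | v N = i ∧ v P = j} with hS₁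
  set S₂ : Set (Equiv.Perm (Fin n)) := {v | v N = i ∧ v Z = j} with hS₂
  set f₁ : Equiv.Perm (Fin n) → Sym2 (Equiv.Perm (Fin n)) := fun v => s(v, v * t) with hf₁
  set f₂ : Equiv.Perm (Fin n) → Sym2 (Equiv.Perm (Fin n)) := fun v => s(v, v * s) with hf₂
  -- adjacency facts
  have hadj₁ : ∀ v : Equiv.Perm (Fin n), (BS n).Adj v (v * t) := by
    intro v
    rw [BS, SimpleGraph.fromRel_adj]
    refine ⟨?_, Or.inr ?_⟩
    · intro h
      have h' := app h P
      rw [Equiv.Perm.mul_apply, htP] at h'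
      exact hPN (v.injective h'.symm).symm
    · right
      exact ⟨P, N, by simp only [hP, hN]; omega, by simp only [hP]; omega, rfl⟩
  have hadj₂ : ∀ v : Equiv.Perm (Fin n), (BS n).Adj v (v * s) := by
    intro v
    rw [BS, SimpleGraph.fromRel_adj]
    refine ⟨?_, Or.inr ?_⟩
    · intro h
      have h' := app h Z
      rw [Equiv.Perm.mul_apply, hsZ] at h'
      exact hZN (v.injective h'.symm).symm
    · left
      refine ⟨N, by simp only [hN]; omega, ?_⟩
      have hZ' : (⟨0, N.pos⟩ : Fin n) = Z := rfl
      rw [hZ', ← hs]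
  have hsliceN : ∀ (k : Fin n) (a : Equiv.Perm (Fin n)), a ∈ BSslice k ↔ a N = k := by
    intro k a
    constructor
    · intro h; exact h
    · intro h; exact h
  refine ⟨f₁ '' S₁ ∪ f₂ '' S₂, ?_, ?_, ?_, ?_⟩
  · rintro e (⟨v, hv, rfl⟩ | ⟨v, hv, rfl⟩)
    · exact hadj₁ v
    · exact hadj₂ v
  · -- cardinality
    have hinj₁ : Set.InjOn f₁ S₁ := by
      intro v hv w hw h
      simp only [hf₁, Sym2.eq_iff] at h
      rcases h with ⟨h, -⟩ | ⟨h1, h2⟩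
      · exact h
      · exfalso
        have hx : v N = w P := by rw [app h1 N, Equiv.Perm.mul_apply, htN]
        exact hij (hv.1.symm.trans (hx.trans hw.2))
    have hinj₂ : Set.InjOn f₂ S₂ := by
      intro v hv w hw h
      simp only [hf₂, Sym2.eq_iff] at h
      rcases h with ⟨h, -⟩ | ⟨h1, h2⟩
      · exact h
      · exfalso
        have hx : v N = w Z := by rw [app h1 N, Equiv.Perm.mul_apply, hsN]
        exact hij (hv.1.symm.trans (hx.trans hw.2))
    have hdisj : Disjoint (f₁ '' S₁) (f₂ '' S₂) := by
      rw [Set.disjoint_left]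
      rintro e ⟨v, hv, rfl⟩ ⟨w, hw, he⟩
      simp only [hf₁, hf₂, Sym2.eq_iff] at he
      rcases he with ⟨h1, -⟩ | ⟨h1, h2⟩
      · -- w = v
        have : w P = w Z := by rw [h1, hv.2, ← hw.2, h1]
        exact hZP ((w.injective this).symm)
      · -- w = v * t
        have : w N = j := by rw [app h1 N, Equiv.Perm.mul_apply, htN, hv.2]
        exact hij (hw.1.symm.trans this)
    rw [Set.ncard_union_eq hdisj (Set.toFinite _) (Set.toFinite _),
      Set.ncard_image_of_injOn hinj₁, Set.ncard_image_of_injOn hinj₂, hS₁, hS₂,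
      card_two_point n N P i j (Ne.symm hPN) hij,
      card_two_point n N Z i j (Ne.symm hZN) hij, two_mul]
  · rintro e (⟨v, hv, rfl⟩ | ⟨v, hv, rfl⟩)
    · exact ⟨v, v * t, rfl, (hsliceN i v).2 hv.1,
        (hsliceN j (v * t)).2 (by rw [Equiv.Perm.mul_apply, htN]; exact hv.2)⟩
    · exact ⟨v, v * s, rfl, (hsliceN i v).2 hv.1,
        (hsliceN j (v * s)).2 (by rw [Equiv.Perm.mul_apply, hsN]; exact hv.2)⟩
  · -- pairwise independence
    rintro e he f hf hef x ⟨hxe, hxf⟩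
    rcases he with ⟨v, hv, rfl⟩ | ⟨v, hv, rfl⟩ <;>
      rcases hf with ⟨w, hw, rfl⟩ | ⟨w, hw, rfl⟩
    · -- f₁ v vs f₁ w
      simp only [hf₁, Sym2.mem_iff] at hxe hxf
      rcases hxe with rfl | rfl <;> rcases hxf with h | h
      · exact hef (by rw [h])
      · -- x = v = w * t
        have : x N = j := by rw [app h N, Equiv.Perm.mul_apply, htN, hw.2]
        exact hij (hv.1.symm.trans this)
      · -- v * t = w
        have : w N = j := by rw [← h, Equiv.Perm.mul_apply, htN, hv.2]
        exact hij (hw.1.symm.trans this)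
      · exact hef (by rw [mul_right_cancel (h.symm : w * t = v * t)])
    · -- f₁ v vs f₂ w
      simp only [hf₁, hf₂, Sym2.mem_iff] at hxe hxf
      have hxP : x P = i ∨ x P = j := by
        rcases hxe with rfl | rfl
        · exact Or.inr hv.2
        · exact Or.inl (by rw [Equiv.Perm.mul_apply, htP, hv.1])
      have hxP' : x P = w P := by
        rcases hxf with rfl | rfl
        · rfl
        · rw [Equiv.Perm.mul_apply, hsP]
      rcases hxP with h | h
      · -- w P = i = w N
        have : w P = w N := by rw [← hxP', h, hw.1]
        exact hPN (w.injective this)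
      · -- w P = j = w Z
        have : w P = w Z := by rw [← hxP', h, hw.2]
        exact hZP (w.injective this).symm
    · -- f₂ v vs f₁ w
      simp only [hf₁, hf₂, Sym2.mem_iff] at hxe hxf
      have hxP : x P = i ∨ x P = j := by
        rcases hxf with rfl | rfl
        · exact Or.inr hw.2
        · exact Or.inl (by rw [Equiv.Perm.mul_apply, htP, hw.1])
      have hxP' : x P = v P := by
        rcases hxe with rfl | rfl
        · rfl
        · rw [Equiv.Perm.mul_apply, hsP]
      rcases hxP with h | h
      · have : v P = v N := by rw [← hxP', h, hv.1]
        exact hPN (v.injective this)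
      · have : v P = v Z := by rw [← hxP', h, hv.2]
        exact hZP (v.injective this).symm
    · -- f₂ v vs f₂ w
      simp only [hf₂, Sym2.mem_iff] at hxe hxf
      rcases hxe with rfl | rfl <;> rcases hxf with h | h
      · exact hef (by rw [h])
      · have : x N = j := by rw [app h N, Equiv.Perm.mul_apply, hsN, hw.2]
        exact hij (hv.1.symm.trans this)
      · have : w N = j := by rw [← h, Equiv.Perm.mul_apply, hsN, hv.2]
        exact hij (hw.1.symm.trans this)
      · exact hef (by rw [mul_right_cancel (h.symm : w * s = v * s)])
end

section
/- For every integer n ≥ 3 and any two distinct indices i, j ∈ {1,…,n}, the number of edges of BS_n with one endpoint in BS_n^i and the other endpoint in BS_n^j equals 2·(n−2)!. -/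
open Equiv in
lemma aux_card (n : ℕ) (a b i j : Fin n) (hab : a ≠ b) (hij : i ≠ j) :
    {v : Equiv.Perm (Fin n) | v a = i ∧ v b = j}.ncard = Nat.factorial (n - 2) := by
  classical
  set s : Equiv.Perm (Fin n) := Equiv.swap a i with hs
  have hsb : s b ≠ i := by
    intro h
    have h2 : s b = s a := by rw [h, hs, Equiv.swap_apply_left]
    exact hab (s.injective h2).symm
  set v0 : Equiv.Perm (Fin n) := Equiv.swap (s b) j * s with hv0
  have h0a : v0 a = i := by
    have : s a = i := Equiv.swap_apply_left a i
    simp only [hv0, Equiv.Perm.mul_apply, this]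
    exact Equiv.swap_apply_of_ne_of_ne (Ne.symm hsb) hij
  have h0b : v0 b = j := by
    simp only [hv0, Equiv.Perm.mul_apply]
    exact Equiv.swap_apply_left _ _
  have e1 : {v : Equiv.Perm (Fin n) // v a = i ∧ v b = j} ≃
      {v : Equiv.Perm (Fin n) // v a = a ∧ v b = b} := by
    refine ⟨fun v => ⟨v0⁻¹ * v.1, ?_, ?_⟩, fun v => ⟨v0 * v.1, ?_, ?_⟩, ?_, ?_⟩
    · simp [Equiv.Perm.mul_apply, v.2.1, ← h0a]
    · simp [Equiv.Perm.mul_apply, v.2.2, ← h0b]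
    · simp [Equiv.Perm.mul_apply, v.2.1, h0a]
    · simp [Equiv.Perm.mul_apply, v.2.2, h0b]
    · intro v; ext x; simp [mul_assoc]
    · intro v; ext x; simp [← mul_assoc]
  have e2 : {v : Equiv.Perm (Fin n) // v a = a ∧ v b = b} ≃
      {v : Equiv.Perm (Fin n) // ∀ x, ¬(x ≠ a ∧ x ≠ b) → v x = x} := by
    refine Equiv.subtypeEquivRight fun v => ⟨fun h x hx => ?_, fun h => ⟨h a (by simp), h b (by simp)⟩⟩
    push_neg at hx
    by_cases hxa : x = a
    · subst hxa; exact h.1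
    · rw [hx hxa]; exact h.2
  have e3 : Equiv.Perm {x : Fin n // x ≠ a ∧ x ≠ b} ≃
      {v : Equiv.Perm (Fin n) // ∀ x, ¬(x ≠ a ∧ x ≠ b) → v x = x} :=
    Equiv.Perm.subtypeEquivSubtypePerm _
  have hcard : Fintype.card {x : Fin n // x ≠ a ∧ x ≠ b} = n - 2 := by
    have : ∀ x : Fin n, (x ≠ a ∧ x ≠ b) ↔ x ∉ ({a, b} : Finset (Fin n)) := by
      intro x; simp [not_or]
    rw [Fintype.card_subtype]
    have h2 : (Finset.univ.filter fun x : Fin n => x ≠ a ∧ x ≠ b) = ({a, b} : Finset (Fin n))ᶜ := by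
      ext x; simp [not_or]
    rw [h2, Finset.card_compl, Finset.card_insert_of_notMem (by simp [hab]),
      Finset.card_singleton, Fintype.card_fin]
  have key : Nat.card {v : Equiv.Perm (Fin n) // v a = i ∧ v b = j} = Nat.factorial (n - 2) := by
    rw [Nat.card_congr ((e1.trans e2).trans e3.symm), Nat.card_eq_fintype_card,
      Fintype.card_perm, hcard]
  rw [← Nat.card_coe_set_eq]
  exact key

/-- For every `n ≥ 3` and distinct `i, j`, the number of edges of `BS_n` with one
endpoint in `BS_n^i` and the other in `BS_n^j` equals `2·(n-2)!`. -/
theorem card_edges_between_slices (n : ℕ) (hn : 3 ≤ n) (i j : Fin n) (hij : i ≠ j) :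
    {e : Sym2 (Equiv.Perm (Fin n)) | e ∈ (BS n).edgeSet ∧
        ∃ u w : Equiv.Perm (Fin n), e = s(u, w) ∧ u ∈ BSslice i ∧ w ∈ BSslice j}.ncard
      = 2 * Nat.factorial (n - 2) := by
  classical
  have h1 : 0 < n := by omega
  have hm' : n - 1 < n := by omega
  have hp' : n - 2 < n := by omega
  set z : Fin n := ⟨0, h1⟩ with hz
  set m : Fin n := ⟨n - 1, hm'⟩ with hmm
  set p : Fin n := ⟨n - 2, hp'⟩ with hpp
  have hzm : z ≠ m := by simp only [hz, hmm, Ne, Fin.mk.injEq]; omega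
  have hpm : p ≠ m := by simp only [hpp, hmm, Ne, Fin.mk.injEq]; omega
  have hzp : z ≠ p := by simp only [hz, hpp, Ne, Fin.mk.injEq]; omega
  set s1 : Equiv.Perm (Fin n) := Equiv.swap z m with hs1
  set s2 : Equiv.Perm (Fin n) := Equiv.swap p m with hs2
  have hs1m : s1 m = z := Equiv.swap_apply_right z m
  have hss1 : s1 * s1 = 1 := Equiv.swap_mul_self z m
  have hss2 : s2 * s2 = 1 := Equiv.swap_mul_self p m
  have hs2m : s2 m = p := Equiv.swap_apply_right p m
  have hslice : ∀ (k : Fin n) (a : Equiv.Perm (Fin n)), a ∈ BSslice k ↔ a m = k :=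
    fun _ _ => Iff.rfl
  -- adjacency with different last entries forces s1 or s2
  have hrel : ∀ u w : Equiv.Perm (Fin n), bssRel n u w → u m ≠ w m →
      w = u * s1 ∨ w = u * s2 := by
    rintro u w (⟨k, hk0, hksw⟩ | ⟨k, k', hkk', hk1, hksw⟩) hne
    · have hz' : (⟨0, k.pos⟩ : Fin n) = z := rfl
      rw [hz'] at hksw
      by_cases hkm : k = m
      · left
        rw [hkm, ← hs1] at hksw
        rw [hksw, mul_assoc, hss1, mul_one]
      · exfalso
        apply hne
        have hfix : Equiv.swap z k m = m :=
          Equiv.swap_apply_of_ne_of_ne (Ne.symm hzm) (Ne.symm hkm)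
        rw [hksw, Equiv.Perm.mul_apply, hfix]
    · by_cases hk'm : k' = m
      · right
        have hkp : k = p := by
          apply Fin.ext
          have := hkk'
          rw [hk'm] at this
          simp only [hmm] at this
          simp only [hpp]
          omega
        rw [hkp, hk'm, ← hs2] at hksw
        rw [hksw, mul_assoc, hss2, mul_one]
      · exfalso
        apply hne
        have hkm : k ≠ m := by
          intro h
          rw [h] at hkk'
          simp only [hmm] at hkk'
          omega
        have hfix : Equiv.swap k k' m = m :=
          Equiv.swap_apply_of_ne_of_ne (Ne.symm hkm) (Ne.symm hk'm)
        rw [hksw, Equiv.Perm.mul_apply, hfix]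
  have hadj : ∀ u w : Equiv.Perm (Fin n), (BS n).Adj u w → u m ≠ w m →
      w = u * s1 ∨ w = u * s2 := by
    intro u w hadj hne
    rw [BS, SimpleGraph.fromRel_adj] at hadj
    rcases hadj.2 with h | h
    · exact hrel u w h hne
    · rcases hrel w u h (Ne.symm hne) with h' | h'
      · left; rw [h', mul_assoc, hss1, mul_one]
      · right; rw [h', mul_assoc, hss2, mul_one]
  set S1 : Set (Equiv.Perm (Fin n)) := {u | u m = i ∧ u z = j} with hS1
  set S2 : Set (Equiv.Perm (Fin n)) := {u | u m = i ∧ u p = j} with hS2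
  set f1 : Equiv.Perm (Fin n) → Sym2 (Equiv.Perm (Fin n)) := fun u => s(u, u * s1) with hf1
  set f2 : Equiv.Perm (Fin n) → Sym2 (Equiv.Perm (Fin n)) := fun u => s(u, u * s2) with hf2
  have hE : {e : Sym2 (Equiv.Perm (Fin n)) | e ∈ (BS n).edgeSet ∧
        ∃ u w : Equiv.Perm (Fin n), e = s(u, w) ∧ u ∈ BSslice i ∧ w ∈ BSslice j}
      = f1 '' S1 ∪ f2 '' S2 := by
    ext e
    constructor
    · rintro ⟨hedge, u, w, rfl, hu, hw⟩
      rw [SimpleGraph.mem_edgeSet] at hedge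
      rw [hslice] at hu hw
      have hne : u m ≠ w m := by rw [hu, hw]; exact hij
      rcases hadj u w hedge hne with h | h
      · left
        refine ⟨u, ⟨hu, ?_⟩, ?_⟩
        · rw [← hw, h, Equiv.Perm.mul_apply, hs1m]
        · rw [hf1]; rw [h]
      · right
        refine ⟨u, ⟨hu, ?_⟩, ?_⟩
        · rw [← hw, h, Equiv.Perm.mul_apply, hs2m]
        · rw [hf2]; rw [h]
    · rintro (⟨u, ⟨hum, huz⟩, rfl⟩ | ⟨u, ⟨hum, hup⟩, rfl⟩)
      · refine ⟨?_, u, u * s1, rfl, hum, ?_⟩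
        · rw [SimpleGraph.mem_edgeSet, BS, SimpleGraph.fromRel_adj]
          constructor
          · intro h
            have : u z = u m := by
              conv_lhs => rw [h]
              rw [Equiv.Perm.mul_apply, hs1, Equiv.swap_apply_left]
            exact hzm (u.injective this)
          · right
            left
            exact ⟨m, by simp only [hmm]; omega, rfl⟩
        · rw [hslice, Equiv.Perm.mul_apply, hs1m, huz]
      · refine ⟨?_, u, u * s2, rfl, hum, ?_⟩
        · rw [SimpleGraph.mem_edgeSet, BS, SimpleGraph.fromRel_adj]
          constructor
          · intro h
            have : u p = u m := by
              conv_lhs => rw [h]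
              rw [Equiv.Perm.mul_apply, hs2, Equiv.swap_apply_left]
            exact hpm (u.injective this)
          · right
            right
            exact ⟨p, m, by simp only [hpp, hmm]; omega, by simp only [hpp]; omega, rfl⟩
        · rw [hslice, Equiv.Perm.mul_apply, hs2m, hup]
  have hinj1 : Set.InjOn f1 S1 := by
    intro u hu u' hu' h
    simp only [hf1, Sym2.eq, Sym2.rel_iff', Prod.mk.injEq, Prod.swap_prod_mk] at h
    rcases h with ⟨h, -⟩ | ⟨h, -⟩
    · exact h
    · exfalso
      have : u m = j := by rw [h, Equiv.Perm.mul_apply, hs1m, hu'.2]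
      exact hij (hu.1 ▸ this ▸ rfl)
  have hinj2 : Set.InjOn f2 S2 := by
    intro u hu u' hu' h
    simp only [hf2, Sym2.eq, Sym2.rel_iff', Prod.mk.injEq, Prod.swap_prod_mk] at h
    rcases h with ⟨h, -⟩ | ⟨h, -⟩
    · exact h
    · exfalso
      have : u m = j := by rw [h, Equiv.Perm.mul_apply, hs2m, hu'.2]
      exact hij (hu.1 ▸ this ▸ rfl)
  have hdisj : Disjoint (f1 '' S1) (f2 '' S2) := by
    rw [Set.disjoint_left]
    rintro e ⟨u, hu, rfl⟩ ⟨u', hu', h⟩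
    simp only [hf1, hf2, Sym2.eq, Sym2.rel_iff', Prod.mk.injEq, Prod.swap_prod_mk] at h
    rcases h with ⟨h1', h2'⟩ | ⟨h1', h2'⟩
    · -- u' = u and u' * s2 = u * s1, so s1 = s2
      subst h1'
      have := mul_left_cancel h2'
      have h3 : s2 z = s1 z := by rw [this]
      rw [hs1, hs2, Equiv.swap_apply_left,
        Equiv.swap_apply_of_ne_of_ne hzp hzm] at h3
      exact hzm h3
    · -- u' = u * s1 and u' * s2 = u
      have : u' m = j := by rw [h1', Equiv.Perm.mul_apply, hs1m, hu.2]
      exact hij (hu'.1 ▸ this ▸ rfl)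
  rw [hE, Set.ncard_union_eq hdisj (Set.toFinite _) (Set.toFinite _),
    Set.ncard_image_of_injOn hinj1, Set.ncard_image_of_injOn hinj2, hS1, hS2,
    aux_card n m z i j (Ne.symm hzm) hij, aux_card n m p i j (Ne.symm hpm) hij,
    two_mul]
end
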